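/- arXiv:1902.00988 — 9 statements merged into one kernel-verified Lean document; each statement's English description precedes it below -/
import Mathlib

section
/- Assume the users are indexed in nondecreasing order of deadlines, i.e. d 1 ≤ d 2 ≤ … ≤ d U. Let u be a user, let S be a feasible set of users all with index strictly less than u, and let ℓ be any element of S ∪ {u} of maximum processing requirement, i.e. ν ℓ = max{ν i : i ∈ S ∪ {u}}. Then (S ∪ {u}) \ {ℓ} is feasible. (Lemma 3 of the paper: the schedule produced after the exchange/rescheduling step remains feasible.) -/
/-- A schedule `σ : ℕ → Option (Fin U)` serves the user set `S`:
(i) the users appearing in slots `{1,…,T}` are exactly those of `S`;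
(ii) each `u ∈ S` appears in exactly `ν u` slots;
(iii) every slot at which a user `u` appears is at most `d u`;
(iv) for every `t ∈ {1,…,T}`, the number of busy slots in `{1,…,t}` is at most
`∑_{s=1}^{t} A s`. -/
def Serves (T U : ℕ) (ν d : Fin U → ℕ) (A : ℕ → ℕ)
    (σ : ℕ → Option (Fin U)) (S : Finset (Fin U)) : Prop :=
  (∀ u : Fin U, u ∈ S ↔ ∃ t ∈ Finset.Icc 1 T, σ t = some u) ∧
  (∀ u ∈ S, ((Finset.Icc 1 T).filter (fun t => σ t = some u)).card = ν u) ∧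
  (∀ u : Fin U, ∀ t ∈ Finset.Icc 1 T, σ t = some u → t ≤ d u) ∧
  (∀ t ∈ Finset.Icc 1 T,
    ((Finset.Icc 1 t).filter (fun s => σ s ≠ none)).card ≤ ∑ s ∈ Finset.Icc 1 t, A s)

/-- A user set is feasible if some schedule serves it. -/
def Feasible (T U : ℕ) (ν d : Fin U → ℕ) (A : ℕ → ℕ) (S : Finset (Fin U)) : Prop :=
  ∃ σ : ℕ → Option (Fin U), Serves T U ν d A σ S

/-! If `ℓ` is scheduled in at least `ν u` slots and its deadline is no later than `u`'s, then
handing `ν u` of `ℓ`'s slots to `u` and idling the others meets every deadline, gives every other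
user the same slots, and only removes busy slots, so the energy constraint still holds. -/

open Finset

section Reassign

variable {T U : ℕ} {ν d : Fin U → ℕ} {A : ℕ → ℕ} {σ : ℕ → Option (Fin U)}
  {S : Finset (Fin U)} {ℓ u v : Fin U} {G : Finset ℕ} {t : ℕ}

def reassign (σ : ℕ → Option (Fin U)) (ℓ u : Fin U) (G : Finset ℕ) : ℕ → Option (Fin U) :=
  fun t => if t ∈ G then some u else if σ t = some ℓ then none else σ t

theorem reassign_eq_some_iff (hG : ∀ t ∈ G, σ t = some ℓ) :
    reassign σ ℓ u G t = some v ↔ (t ∈ G ∧ v = u) ∨ (σ t = some v ∧ v ≠ ℓ) := by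
  have := hG t
  unfold reassign
  split_ifs <;> grind

theorem reassign_ne_none (hG : ∀ t ∈ G, σ t = some ℓ) (h : reassign σ ℓ u G t ≠ none) :
    σ t ≠ none := by
  have := hG t
  unfold reassign at h
  split_ifs at h <;> grind

theorem Serves.reassign (hσ : Serves T U ν d A σ S) (hu : u ∉ S)
    (hG : G ⊆ (Icc 1 T).filter (σ · = some ℓ)) (hGcard : G.card = ν u) (hνu : 0 < ν u)
    (hdeadline : d ℓ ≤ d u) :
    Serves T U ν d A (reassign σ ℓ u G) (insert u (S.erase ℓ)) := by
  obtain ⟨hmem, hcount, hdue, henergy⟩ := hσ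
  have hGslot : ∀ t ∈ G, t ∈ Icc 1 T ∧ σ t = some ℓ := fun t ht => mem_filter.mp (hG ht)
  have hGℓ : ∀ t ∈ G, σ t = some ℓ := fun t ht => (hGslot t ht).2
  refine ⟨fun v => ?_, fun v hv => ?_, fun v t ht hvt => ?_, fun t ht => ?_⟩
  · simp only [reassign_eq_some_iff hGℓ, mem_insert, mem_erase, hmem]
    constructor
    · rintro (rfl | ⟨hvℓ, t, ht, hσt⟩)
      · obtain ⟨t, htG⟩ := card_pos.mp (hGcard ▸ hνu)
        exact ⟨t, (hGslot t htG).1, .inl ⟨htG, rfl⟩⟩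
      · exact ⟨t, ht, .inr ⟨hσt, hvℓ⟩⟩
    · rintro ⟨t, ht, ⟨-, rfl⟩ | ⟨hσt, hvℓ⟩⟩
      · exact .inl rfl
      · exact .inr ⟨hvℓ, t, ht, hσt⟩
  · rcases mem_insert.mp hv with rfl | hv
    · have hnot : ∀ t ∈ Icc 1 T, σ t ≠ some v := fun t ht h => hu ((hmem v).mpr ⟨t, ht, h⟩)
      convert hGcard using 2
      ext t
      simp only [mem_filter, reassign_eq_some_iff hGℓ]
      constructor
      · rintro ⟨ht, ⟨htG, -⟩ | ⟨hσt, -⟩⟩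
        exacts [htG, absurd hσt (hnot t ht)]
      · exact fun htG => ⟨(hGslot t htG).1, .inl ⟨htG, trivial⟩⟩
    · obtain ⟨hvℓ, hvS⟩ := mem_erase.mp hv
      have hvu : v ≠ u := fun h => hu (h ▸ hvS)
      rw [← hcount v hvS]
      congr 1
      exact filter_congr fun t _ => by simp [reassign_eq_some_iff hGℓ, hvu, hvℓ]
  · rcases (reassign_eq_some_iff hGℓ).mp hvt with ⟨htG, rfl⟩ | ⟨hσt, -⟩
    · exact (hdue ℓ t (hGslot t htG).1 (hGℓ t htG)).trans hdeadline
    · exact hdue v t ht hσt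
  · refine le_trans (card_le_card ?_) (henergy t ht)
    exact monotone_filter_right _ fun _ _ => reassign_ne_none hGℓ

end Reassign

theorem Feasible.exchange {T U : ℕ} {ν d : Fin U → ℕ} {A : ℕ → ℕ} {S : Finset (Fin U)}
    {ℓ u : Fin U} (hS : Feasible T U ν d A S) (hℓ : ℓ ∈ S) (hu : u ∉ S) (hνu : 0 < ν u)
    (hν : ν u ≤ ν ℓ) (hdeadline : d ℓ ≤ d u) :
    Feasible T U ν d A (insert u (S.erase ℓ)) := by
  obtain ⟨σ, hσ⟩ := hS
  have hslots : ν u ≤ ((Icc 1 T).filter (σ · = some ℓ)).card := hσ.2.1 ℓ hℓ ▸ hν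
  obtain ⟨G, hG, hGcard⟩ := exists_subset_card_eq hslots
  exact ⟨_, hσ.reassign hu hG hGcard hνu hdeadline⟩

theorem stmt0_general (T U : ℕ) (ν d : Fin U → ℕ) (A : ℕ → ℕ)
    (hν : ∀ i, 1 ≤ ν i)
    (hsort : Monotone d)
    (u : Fin U) (S : Finset (Fin U)) (hSlt : ∀ i ∈ S, i < u)
    (hfeas : Feasible T U ν d A S)
    (ℓ : Fin U) (hℓmem : ℓ ∈ insert u S)
    (hℓmax : ∀ i ∈ insert u S, ν i ≤ ν ℓ) :
    Feasible T U ν d A ((insert u S).erase ℓ) := by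
  have huS : u ∉ S := fun h => (hSlt u h).false
  rcases mem_insert.mp hℓmem with rfl | hℓS
  · rwa [erase_insert huS]
  · have hℓu : ℓ < u := hSlt ℓ hℓS
    rw [erase_insert_of_ne hℓu.ne']
    exact hfeas.exchange hℓS huS (hν u) (hℓmax u (mem_insert_self u S)) (hsort hℓu.le)

/-- Lemma 3: if `S` is a feasible set of users all with index strictly less than `u`
(users being indexed in nondecreasing order of deadlines), and `ℓ` is an element of
`S ∪ {u}` of maximum processing requirement, then `(S ∪ {u}) \ {ℓ}` is feasible. -/
theorem stmt0 (T U : ℕ) (ν d : Fin U → ℕ) (A : ℕ → ℕ)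
    (hν : ∀ i, 1 ≤ ν i) (hd : ∀ i, d i ∈ Finset.Icc 1 T)
    (hsort : Monotone d)
    (u : Fin U) (S : Finset (Fin U)) (hSlt : ∀ i ∈ S, i < u)
    (hfeas : Feasible T U ν d A S)
    (ℓ : Fin U) (hℓmem : ℓ ∈ insert u S)
    (hℓmax : ∀ i ∈ insert u S, ν i ≤ ν ℓ) :
    Feasible T U ν d A ((insert u S).erase ℓ) :=
  stmt0_general T U ν d A hν hsort u S hSlt hfeas ℓ hℓmem hℓmax
end

section
/- Assume the users are indexed in nondecreasing order of deadlines, i.e. d 1 ≤ d 2 ≤ … ≤ d U. Define sets S⁰ = ∅ and, for u = 1,…,U: S^u = S^{u−1} ∪ {u} if S^{u−1} ∪ {u} is feasible, and otherwise S^u = (S^{u−1} ∪ {u}) \ {ℓ_u}, where ℓ_u is an element of S^{u−1} ∪ {u} of maximum processing requirement ν. Then for every u ∈ {1,…,U}, the set S^u is feasible and has maximum cardinality among all feasible subsets of {1,…,u}. (Theorem 1 of the paper: the schedule Σ^u produced by ALG-SCSB₁ is u-optimal.) -/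
namespace SCSB

def Eng (A : ℕ → ℕ) (t : ℕ) : ℕ := ∑ s ∈ Finset.Icc 1 t, A s
def cap (A : ℕ → ℕ) : ℕ → ℕ
  | 0 => 0
  | t+1 => min (cap A t + 1) (Eng A (t+1))
lemma Eng_mono (A : ℕ → ℕ) : Monotone (Eng A) := fun _ _ h =>
  Finset.sum_le_sum_of_subset (Finset.Icc_subset_Icc_right h)
lemma cap_le_Eng (A : ℕ → ℕ) : ∀ t, cap A t ≤ Eng A t
  | 0 => by simp [cap, Eng]
  | t+1 => min_le_right _ _
lemma cap_succ_le (A : ℕ → ℕ) (t : ℕ) : cap A (t+1) ≤ cap A t + 1 := min_le_left _ _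
lemma cap_mono (A : ℕ → ℕ) : Monotone (cap A) :=
  monotone_nat_of_le_succ fun t =>
    le_min (Nat.le_succ _) ((cap_le_Eng A t).trans (Eng_mono A t.le_succ))
lemma cap_zero (A : ℕ → ℕ) : cap A 0 = 0 := rfl

/-- The slot of the `j`-th unit task in the left-packed schedule. -/
noncomputable def q (A : ℕ → ℕ) (j : ℕ) : ℕ := sInf {t | j ≤ cap A t}

lemma q_le {A : ℕ → ℕ} {j t : ℕ} (h : j ≤ cap A t) : q A j ≤ t :=
  Nat.sInf_le (show t ∈ {t | j ≤ cap A t} from h)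

lemma le_cap_q {A : ℕ → ℕ} {j T : ℕ} (hT : j ≤ cap A T) : j ≤ cap A (q A j) :=
  Nat.sInf_mem ⟨T, show T ∈ {t | j ≤ cap A t} from hT⟩

lemma q_pos {A : ℕ → ℕ} {j T : ℕ} (hj : 1 ≤ j) (hT : j ≤ cap A T) : 1 ≤ q A j := by
  by_contra h
  have h0 : q A j = 0 := by omega
  have := le_cap_q hT
  rw [h0, cap_zero] at this
  omega

lemma cap_q_pred {A : ℕ → ℕ} {j T : ℕ} (hj : 1 ≤ j) (hT : j ≤ cap A T) :
    cap A (q A j - 1) < j := by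
  have h1 := q_pos hj hT
  have h2 : q A j - 1 < q A j := by omega
  have := Nat.notMem_of_lt_sInf (s := {t | j ≤ cap A t}) h2
  simpa [Set.mem_setOf_eq] using this

lemma cap_q_eq {A : ℕ → ℕ} {j T : ℕ} (hj : 1 ≤ j) (hT : j ≤ cap A T) :
    cap A (q A j) = j := by
  have h1 := q_pos hj hT
  have h2 := cap_q_pred hj hT
  have h3 := le_cap_q hT
  have h4 := cap_succ_le A (q A j - 1)
  have h5 : q A j - 1 + 1 = q A j := by omega
  rw [h5] at h4
  omega

lemma q_uniq {A : ℕ → ℕ} {t : ℕ} (h1 : 1 ≤ t) (h2 : cap A (t-1) < cap A t) :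
    t = q A (cap A t) := by
  have hle : q A (cap A t) ≤ t := q_le le_rfl
  rcases Nat.lt_or_ge (q A (cap A t)) t with h | h
  · exfalso
    have hq : q A (cap A t) ≤ t - 1 := by omega
    have : cap A (q A (cap A t)) ≤ cap A (t-1) := cap_mono A hq
    have := le_cap_q (T := t) (le_refl (cap A t))
    omega
  · omega

/-- Cumulative processing of users of `S` up to and including `u`. -/
def Lfun {U : ℕ} (ν : Fin U → ℕ) (S : Finset (Fin U)) (u : Fin U) : ℕ :=
  ∑ v ∈ S.filter (fun v => v ≤ u), ν v

/-- The owner of unit task `j`: least user `u ∈ S` with `j ≤ Lfun u`. -/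
def owner {U : ℕ} (ν : Fin U → ℕ) (S : Finset (Fin U)) (j : ℕ) : Option (Fin U) :=
  if h : (S.filter fun u => j ≤ Lfun ν S u).Nonempty
  then some ((S.filter fun u => j ≤ Lfun ν S u).min' h) else none

lemma owner_spec {U : ℕ} {ν : Fin U → ℕ} {S : Finset (Fin U)} {j : ℕ} {u : Fin U}
    (h : owner ν S j = some u) :
    u ∈ S ∧ j ≤ Lfun ν S u ∧ ∀ v ∈ S, j ≤ Lfun ν S v → u ≤ v := by
  unfold owner at h
  split at h
  case isTrue hne =>
    have hu := Option.some_injective _ h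
    have hmem := Finset.min'_mem _ hne
    rw [hu] at hmem
    rw [Finset.mem_filter] at hmem
    refine ⟨hmem.1, hmem.2, fun v hv hjv => ?_⟩
    have hvm : v ∈ S.filter fun u => j ≤ Lfun ν S u := Finset.mem_filter.2 ⟨hv, hjv⟩
    have := Finset.min'_le _ v hvm
    rwa [hu] at this
  case isFalse => exact absurd h (by simp)

lemma owner_eq {U : ℕ} {ν : Fin U → ℕ} {S : Finset (Fin U)} {j : ℕ} {u : Fin U}
    (hu : u ∈ S) (hj : j ≤ Lfun ν S u)
    (hmin : ∀ v ∈ S, v < u → Lfun ν S v < j) : owner ν S j = some u := by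
  have hne : (S.filter fun v => j ≤ Lfun ν S v).Nonempty :=
    ⟨u, Finset.mem_filter.2 ⟨hu, hj⟩⟩
  unfold owner
  rw [dif_pos hne]
  congr 1
  have hmem := Finset.min'_mem _ hne
  rw [Finset.mem_filter] at hmem
  have h1 : u ≤ (S.filter fun v => j ≤ Lfun ν S v).min' hne := by
    by_contra hcon
    push_neg at hcon
    exact absurd hmem.2 (Nat.not_le.2 (hmin _ hmem.1 hcon))
  have hum : u ∈ S.filter fun v => j ≤ Lfun ν S v := Finset.mem_filter.2 ⟨hu, hj⟩
  exact le_antisymm (Finset.min'_le _ u hum) h1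

/-- The left-packed schedule serving `S`. -/
def sched {U : ℕ} (A : ℕ → ℕ) (ν : Fin U → ℕ) (S : Finset (Fin U)) (t : ℕ) :
    Option (Fin U) :=
  if 1 ≤ t ∧ cap A (t-1) < cap A t ∧ cap A t ≤ ∑ u ∈ S, ν u
  then owner ν S (cap A t) else none

lemma sched_spec {U : ℕ} {A : ℕ → ℕ} {ν : Fin U → ℕ} {S : Finset (Fin U)} {t : ℕ}
    (h : sched A ν S t ≠ none) :
    1 ≤ t ∧ cap A (t-1) < cap A t ∧ cap A t ≤ ∑ u ∈ S, ν u ∧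
      sched A ν S t = owner ν S (cap A t) := by
  unfold sched at h ⊢
  split at h
  case isTrue hc => exact ⟨hc.1, hc.2.1, hc.2.2, if_pos hc⟩
  case isFalse => exact absurd rfl h

def load {U : ℕ} (ν d : Fin U → ℕ) (S : Finset (Fin U)) (t : ℕ) : ℕ :=
  ∑ u ∈ S.filter (fun u => d u ≤ t), ν u

lemma load_eq_sum {U : ℕ} (ν d : Fin U → ℕ) {S : Finset (Fin U)} {t : ℕ}
    (h : ∀ u ∈ S, d u ≤ t) : load ν d S t = ∑ u ∈ S, ν u := by
  unfold load; rw [Finset.filter_true_of_mem h]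

lemma Lfun_le_sum {U : ℕ} (ν : Fin U → ℕ) (S : Finset (Fin U)) (u : Fin U) :
    Lfun ν S u ≤ ∑ v ∈ S, ν v :=
  Finset.sum_le_sum_of_subset (Finset.filter_subset _ _)

lemma Lfun_eq {U : ℕ} {ν : Fin U → ℕ} {S : Finset (Fin U)} {u : Fin U} (hu : u ∈ S) :
    Lfun ν S u = (∑ v ∈ S.filter (fun v => v < u), ν v) + ν u := by
  unfold Lfun
  have hins : S.filter (fun v => v ≤ u) = insert u (S.filter (fun v => v < u)) := by
    ext v
    simp only [Finset.mem_filter, Finset.mem_insert]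
    constructor
    · rintro ⟨hv, hle⟩
      rcases lt_or_eq_of_le hle with hlt | heq
      · exact Or.inr ⟨hv, hlt⟩
      · exact Or.inl heq
    · rintro (rfl | ⟨hv, hlt⟩)
      · exact ⟨hu, le_rfl⟩
      · exact ⟨hv, le_of_lt hlt⟩
  rw [hins, Finset.sum_insert (by simp)]
  ring

lemma Lfun_lt_le {U : ℕ} {ν : Fin U → ℕ} {S : Finset (Fin U)} {u v : Fin U}
    (hlt : v < u) : Lfun ν S v ≤ ∑ w ∈ S.filter (fun w => w < u), ν w :=
  Finset.sum_le_sum_of_subset (fun w hw => by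
    rw [Finset.mem_filter] at hw ⊢
    exact ⟨hw.1, lt_of_le_of_lt hw.2 hlt⟩)

lemma feasible_of_load_le {T U : ℕ} {ν d : Fin U → ℕ} {A : ℕ → ℕ} {S : Finset (Fin U)}
    (hν : ∀ i, 1 ≤ ν i) (hd : ∀ i, d i ∈ Finset.Icc 1 T) (hsort : Monotone d)
    (h : ∀ t ∈ Finset.Icc 1 T, load ν d S t ≤ cap A t) :
    Feasible T U ν d A S := by
  rcases S.eq_empty_or_nonempty with rfl | ⟨u0, hu0⟩
  · refine ⟨fun _ => none, ?_, ?_, ?_, ?_⟩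
    · simp
    · simp
    · simp
    · intro t _; simp
  · have hu0d := hd u0
    rw [Finset.mem_Icc] at hu0d
    have hT : 1 ≤ T := le_trans hu0d.1 hu0d.2
    set m := ∑ u ∈ S, ν u with hmdef
    have hmT : m ≤ cap A T := by
      have := h T (Finset.mem_Icc.2 ⟨hT, le_rfl⟩)
      rwa [load_eq_sum ν d (fun u hu => (Finset.mem_Icc.1 (hd u)).2)] at this
    have hLcap : ∀ u ∈ S, Lfun ν S u ≤ cap A (d u) := by
      intro u hu
      refine le_trans ?_ (h (d u) (hd u))
      exact Finset.sum_le_sum_of_subset (fun v hv => by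
        rw [Finset.mem_filter] at hv ⊢
        exact ⟨hv.1, hsort hv.2⟩)
    -- the two key facts about the schedule
    have main_mem : ∀ u ∈ S, ∀ j, (∑ v ∈ S.filter (fun v => v < u), ν v) < j →
        j ≤ Lfun ν S u →
        sched A ν S (q A j) = some u ∧ q A j ∈ Finset.Icc 1 T := by
      intro u hu j hPj hjL
      have hj1 : 1 ≤ j := by omega
      have hjm : j ≤ m := hjL.trans (Lfun_le_sum ν S u)
      have hjT : j ≤ cap A T := hjm.trans hmT
      have hqd : q A j ≤ d u := q_le (hjL.trans (hLcap u hu))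
      have h1 : 1 ≤ q A j := q_pos hj1 hjT
      have hcq := cap_q_eq hj1 hjT
      constructor
      · unfold sched
        rw [if_pos ⟨h1, by rw [hcq]; exact cap_q_pred hj1 hjT, by rw [hcq]; exact hjm⟩, hcq]
        exact owner_eq hu hjL
          (fun v hv hlt => Nat.lt_of_le_of_lt (Lfun_lt_le hlt) hPj)
      · exact Finset.mem_Icc.2 ⟨h1, hqd.trans (Finset.mem_Icc.1 (hd u)).2⟩
    have busy_inv : ∀ t : ℕ, ∀ u : Fin U, sched A ν S t = some u →
        u ∈ S ∧ t = q A (cap A t) ∧ cap A t ≤ Lfun ν S u ∧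
        (∑ v ∈ S.filter (fun v => v < u), ν v) < cap A t ∧
        1 ≤ cap A t ∧ cap A t ≤ m := by
      intro t u hsu
      have hne : sched A ν S t ≠ none := by rw [hsu]; simp
      obtain ⟨ht1, htc, htm, heq⟩ := sched_spec hne
      rw [hsu] at heq
      obtain ⟨huS, huL, humin⟩ := owner_spec heq.symm
      have hj1 : 1 ≤ cap A t := by omega
      refine ⟨huS, q_uniq ht1 htc, huL, ?_, hj1, htm⟩
      by_contra hcon
      push_neg at hcon
      have hPpos : 1 ≤ ∑ v ∈ S.filter (fun v => v < u), ν v := le_trans hj1 hcon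
      have hne2 : (S.filter (fun v => v < u)).Nonempty := by
        rw [Finset.nonempty_iff_ne_empty]
        intro hemp
        rw [hemp, Finset.sum_empty] at hPpos
        omega
      set v := (S.filter (fun v => v < u)).max' hne2 with hvdef
      have hvm := Finset.max'_mem _ hne2
      rw [Finset.mem_filter] at hvm
      have hLv : (∑ w ∈ S.filter (fun w => w < u), ν w) ≤ Lfun ν S v := by
        refine Finset.sum_le_sum_of_subset (fun w hw => ?_)
        rw [Finset.mem_filter] at hw ⊢
        exact ⟨hw.1, Finset.le_max' _ w (Finset.mem_filter.2 hw)⟩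
      have := humin v hvm.1 (le_trans hcon hLv)
      exact absurd hvm.2 (not_lt.2 this)
    refine ⟨sched A ν S, ?_, ?_, ?_, ?_⟩
    · -- (i)
      intro u
      constructor
      · intro hu
        have hLu := Lfun_eq (ν := ν) hu
        have := main_mem u hu (Lfun ν S u) (by have := hν u; omega) le_rfl
        exact ⟨q A (Lfun ν S u), this.2, this.1⟩
      · rintro ⟨t, _, hsu⟩
        exact (busy_inv t u hsu).1
    · -- (ii)
      intro u hu
      have himg : (Finset.Icc 1 T).filter (fun t => sched A ν S t = some u)
          = (Finset.Ioc (∑ v ∈ S.filter (fun v => v < u), ν v) (Lfun ν S u)).image (q A) := by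
        ext t
        rw [Finset.mem_filter, Finset.mem_image]
        constructor
        · rintro ⟨htI, hsu⟩
          obtain ⟨_, hq, hL, hP, _, _⟩ := busy_inv t u hsu
          exact ⟨cap A t, Finset.mem_Ioc.2 ⟨hP, hL⟩, hq.symm⟩
        · rintro ⟨j, hj, rfl⟩
          rw [Finset.mem_Ioc] at hj
          have := main_mem u hu j hj.1 hj.2
          exact ⟨this.2, this.1⟩
      rw [himg, Finset.card_image_of_injOn, Nat.card_Ioc]
      · have := Lfun_eq (ν := ν) hu
        omega
      · intro j hj j' hj' hqq
        rw [Finset.coe_Ioc, Set.mem_Ioc] at hj hj'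
        have hjT : j ≤ cap A T := ((hj.2.trans (Lfun_le_sum ν S u)).trans hmT)
        have hjT' : j' ≤ cap A T := ((hj'.2.trans (Lfun_le_sum ν S u)).trans hmT)
        have e1 := cap_q_eq (by omega : 1 ≤ j) hjT
        have e2 := cap_q_eq (by omega : 1 ≤ j') hjT'
        rw [← e1, ← e2, hqq]
    · -- (iii)
      intro u t htI hsu
      obtain ⟨huS, hq, hL, _, hj1, _⟩ := busy_inv t u hsu
      have : t ≤ d u := by
        rw [hq]
        exact q_le (hL.trans (hLcap u huS))
      exact this
    · -- (iv)
      intro t htI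
      rw [Finset.mem_Icc] at htI
      have hsub : (Finset.Icc 1 t).filter (fun s => sched A ν S s ≠ none)
          ⊆ (Finset.Icc 1 (cap A t)).image (q A) := by
        intro s hs
        rw [Finset.mem_filter, Finset.mem_Icc] at hs
        obtain ⟨⟨hs1, hst⟩, hsn⟩ := hs
        obtain ⟨h1, hc, _, _⟩ := sched_spec hsn
        rw [Finset.mem_image]
        refine ⟨cap A s, Finset.mem_Icc.2 ⟨by omega, cap_mono A hst⟩, (q_uniq h1 hc).symm⟩
      calc ((Finset.Icc 1 t).filter (fun s => sched A ν S s ≠ none)).card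
          ≤ ((Finset.Icc 1 (cap A t)).image (q A)).card := Finset.card_le_card hsub
        _ ≤ (Finset.Icc 1 (cap A t)).card := Finset.card_image_le
        _ = cap A t := by rw [Nat.card_Icc]; omega
        _ ≤ ∑ s ∈ Finset.Icc 1 t, A s := cap_le_Eng A t

lemma load_mono_set {U : ℕ} (ν d : Fin U → ℕ) {S' S : Finset (Fin U)} (h : S' ⊆ S)
    (t : ℕ) : load ν d S' t ≤ load ν d S t :=
  Finset.sum_le_sum_of_subset (Finset.filter_subset_filter _ h)

lemma load_insert {U : ℕ} (ν d : Fin U → ℕ) {S : Finset (Fin U)} {k : Fin U}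
    (hk : k ∉ S) (t : ℕ) :
    load ν d (insert k S) t = load ν d S t + if d k ≤ t then ν k else 0 := by
  unfold load
  rw [Finset.filter_insert]
  split
  · rw [Finset.sum_insert (fun h => hk (Finset.mem_filter.1 h).1)]; ring
  · simp

lemma busy_le_cap {U : ℕ} (A : ℕ → ℕ) (T : ℕ) (σ : ℕ → Option (Fin U))
    (hiv : ∀ t ∈ Finset.Icc 1 T,
      ((Finset.Icc 1 t).filter (fun s => σ s ≠ none)).card ≤ Eng A t) :
    ∀ t, t ≤ T → ((Finset.Icc 1 t).filter (fun s => σ s ≠ none)).card ≤ cap A t := by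
  intro t
  induction t with
  | zero => intro _; simp [cap]
  | succ t ih =>
    intro ht
    refine le_min ?_ (hiv _ (Finset.mem_Icc.2 ⟨Nat.succ_le_succ (Nat.zero_le _), ht⟩))
    rw [← Finset.insert_Icc_right_eq_Icc_add_one (Nat.succ_le_succ (Nat.zero_le _)), Finset.filter_insert]
    split
    · exact (Finset.card_insert_le _ _).trans (Nat.succ_le_succ (ih (Nat.le_of_succ_le ht)))
    · exact (ih (Nat.le_of_succ_le ht)).trans (Nat.le_succ _)

lemma load_le_cap {T U : ℕ} {ν d : Fin U → ℕ} {A : ℕ → ℕ} {S : Finset (Fin U)}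
    (h : Feasible T U ν d A S) :
    ∀ t ∈ Finset.Icc 1 T, load ν d S t ≤ cap A t := by
  obtain ⟨σ, h1, h2, h3, h4⟩ := h
  intro t ht
  rw [Finset.mem_Icc] at ht
  have key : ∀ u ∈ S.filter (fun u => d u ≤ t),
      (Finset.Icc 1 T).filter (fun s => σ s = some u)
        = (Finset.Icc 1 t).filter (fun s => σ s = some u) := by
    intro u hu
    rw [Finset.mem_filter] at hu
    ext s
    simp only [Finset.mem_filter, Finset.mem_Icc]
    constructor
    · rintro ⟨⟨h1s, h2s⟩, hs⟩
      exact ⟨⟨h1s, (h3 u s (Finset.mem_Icc.2 ⟨h1s, h2s⟩) hs).trans hu.2⟩, hs⟩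
    · rintro ⟨⟨h1s, h2s⟩, hs⟩
      exact ⟨⟨h1s, h2s.trans ht.2⟩, hs⟩
  have hload : load ν d S t
      = ∑ u ∈ S.filter (fun u => d u ≤ t),
          ((Finset.Icc 1 t).filter (fun s => σ s = some u)).card := by
    unfold load
    refine Finset.sum_congr rfl fun u hu => ?_
    rw [← key u hu, h2 u (Finset.mem_filter.1 hu).1]
  rw [hload, ← Finset.card_biUnion]
  · refine le_trans (Finset.card_le_card ?_) (busy_le_cap A T σ h4 t ht.2)
    intro s hs
    rw [Finset.mem_biUnion] at hs
    obtain ⟨u, _, hs⟩ := hs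
    rw [Finset.mem_filter] at hs ⊢
    exact ⟨hs.1, by simp [hs.2]⟩
  · intro u _ v _ huv
    refine Finset.disjoint_left.2 fun s hs hs' => huv ?_
    rw [Finset.mem_filter] at hs hs'
    exact Option.some_injective _ (hs.2.symm.trans hs'.2)

end SCSB

open SCSB in
/-- Theorem 1: the sets `S^u` produced by ALG-SCSB₁ (greedily insert user `u`; if the
result is infeasible, remove an element of maximum processing requirement) are feasible
and of maximum cardinality among feasible subsets of `{1,…,u}`. -/
theorem stmt1 (T U : ℕ) (ν d : Fin U → ℕ) (A : ℕ → ℕ)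
    (hν : ∀ i, 1 ≤ ν i) (hd : ∀ i, d i ∈ Finset.Icc 1 T)
    (hsort : Monotone d)
    (Sfun : ℕ → Finset (Fin U))
    (h0 : Sfun 0 = ∅)
    (hrec : ∀ k : Fin U,
      (Feasible T U ν d A (insert k (Sfun k.val)) →
        Sfun (k.val + 1) = insert k (Sfun k.val)) ∧
      (¬ Feasible T U ν d A (insert k (Sfun k.val)) →
        ∃ ℓ ∈ insert k (Sfun k.val),
          (∀ i ∈ insert k (Sfun k.val), ν i ≤ ν ℓ) ∧
          Sfun (k.val + 1) = (insert k (Sfun k.val)).erase ℓ)) :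
    ∀ k : Fin U,
      Feasible T U ν d A (Sfun (k.val + 1)) ∧
      (∀ i ∈ Sfun (k.val + 1), i ≤ k) ∧
      (∀ W : Finset (Fin U), (∀ i ∈ W, i ≤ k) → Feasible T U ν d A W →
        W.card ≤ (Sfun (k.val + 1)).card) := by
  have key : ∀ n, n ≤ U →
      (∀ t ∈ Finset.Icc 1 T, load ν d (Sfun n) t ≤ cap A t) ∧
      (∀ i ∈ Sfun n, i.val < n) ∧
      (∀ W : Finset (Fin U), (∀ i ∈ W, i.val < n) →
        (∀ t ∈ Finset.Icc 1 T, load ν d W t ≤ cap A t) →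
        ∃ R ⊆ Sfun n, R.card = W.card ∧ ∑ i ∈ R, ν i ≤ ∑ i ∈ W, ν i) := by
    intro n
    induction n with
    | zero =>
      intro _
      refine ⟨by simp [h0, load], by simp [h0], ?_⟩
      intro W hW _
      have : W = ∅ := Finset.eq_empty_of_forall_notMem (fun i hi => by
        have := hW i hi; omega)
      exact ⟨∅, by simp [h0], by simp [this], by simp [this]⟩
    | succ n ih =>
      intro hn1
      obtain ⟨ihf, ihb, ihex⟩ := ih (by omega)
      set k : Fin U := ⟨n, by omega⟩ with hkdef
      set S : Finset (Fin U) := Sfun n with hSdef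
      have hkS : k ∉ S := fun h => by have := ihb k h; simp [hkdef] at this
      have hle_k : ∀ i : Fin U, i.val < n + 1 → i ≤ k := fun i hi =>
        Fin.le_def.2 (by simp [hkdef]; omega)
      have hbound : ∀ i ∈ insert k S, i.val < n + 1 := by
        intro i hi
        rcases Finset.mem_insert.1 hi with rfl | hi
        · simp [hkdef]
        · have := ihb i hi; omega
      have hSk : Sfun k.val = S := by rw [hSdef, hkdef]
      by_cases hfeas : Feasible T U ν d A (insert k (Sfun k.val))
      · -- user k is accepted
        have hS1 : Sfun (n + 1) = insert k S := by
          have := (hrec k).1 hfeas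
          rwa [hSk] at this
        rw [hSk] at hfeas
        refine ⟨by rw [hS1]; exact load_le_cap hfeas, by rw [hS1]; exact hbound, ?_⟩
        intro W hW hfW
        rw [hS1]
        by_cases hkW : k ∈ W
        · have hV : ∀ i ∈ W.erase k, i.val < n := by
            intro i hi
            rw [Finset.mem_erase] at hi
            have h1 := hW i hi.2
            have h2 : i.val ≠ n := fun h => hi.1 (Fin.ext (by simp [hkdef, h]))
            omega
          have hfV : ∀ t ∈ Finset.Icc 1 T, load ν d (W.erase k) t ≤ cap A t :=
            fun t ht => (load_mono_set ν d (Finset.erase_subset _ _) t).trans (hfW t ht)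
          obtain ⟨R, hRS, hRcard, hRsum⟩ := ihex (W.erase k) hV hfV
          have hkR : k ∉ R := fun h => hkS (hRS h)
          refine ⟨insert k R, Finset.insert_subset_insert _ hRS, ?_, ?_⟩
          · rw [Finset.card_insert_of_notMem hkR, hRcard,
              Finset.card_erase_of_mem hkW]
            have := Finset.card_pos.2 ⟨k, hkW⟩
            omega
          · rw [Finset.sum_insert hkR]
            calc ν k + ∑ i ∈ R, ν i ≤ ν k + ∑ i ∈ W.erase k, ν i := by omega
              _ = ∑ i ∈ W.erase k, ν i + ν k := by ring
              _ = ∑ i ∈ W, ν i := Finset.sum_erase_add _ _ hkW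
        · have hWn : ∀ i ∈ W, i.val < n := by
            intro i hi
            have h1 := hW i hi
            have h2 : i.val ≠ n := fun h => hkW (by
              have : i = k := Fin.ext (by simp [hkdef, h])
              rwa [this] at hi)
            omega
          obtain ⟨R, hRS, hRcard, hRsum⟩ := ihex W hWn hfW
          exact ⟨R, hRS.trans (Finset.subset_insert _ _), hRcard, hRsum⟩
      · -- user k is rejected ; some max-ν element ℓ is removed
        obtain ⟨ℓ, hℓmem, hℓmax, hS1⟩ := (hrec k).2 hfeas
        rw [hSk] at hℓmem hℓmax hS1 hfeas
        have hνkℓ : ν k ≤ ν ℓ := hℓmax k (Finset.mem_insert_self _ _)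
        -- extract infeasibility information
        have hnl : ¬ ∀ t ∈ Finset.Icc 1 T, load ν d (insert k S) t ≤ cap A t :=
          fun hc => hfeas (feasible_of_load_le hν hd hsort hc)
        push_neg at hnl
        obtain ⟨t0, ht0, hl0⟩ := hnl
        have hdk0 : d k ≤ t0 := by
          by_contra hcon
          rw [load_insert ν d hkS, if_neg hcon] at hl0
          have := ihf t0 ht0
          omega
        have hall : ∀ i ∈ insert k S, d i ≤ t0 := by
          intro i hi
          rcases Finset.mem_insert.1 hi with rfl | hi
          · exact hdk0
          · exact le_trans (hsort (hle_k i (by have := ihb i hi; omega))) hdk0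
        have hgt : cap A t0 < ∑ i ∈ insert k S, ν i := by
          rw [← load_eq_sum ν d hall]; exact hl0
        -- feasibility of the new set
        have hfS' : ∀ t ∈ Finset.Icc 1 T, load ν d (Sfun (n+1)) t ≤ cap A t := by
          rw [hS1]
          by_cases hℓk : ℓ = k
          · rw [hℓk, Finset.erase_insert hkS]; exact ihf
          · have hℓS : ℓ ∈ S := (Finset.mem_insert.1 hℓmem).resolve_left hℓk
            have hrw : (insert k S).erase ℓ = insert k (S.erase ℓ) :=
              Finset.erase_insert_of_ne (fun h => hℓk h.symm)
            rw [hrw]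
            intro t ht
            have hkSe : k ∉ S.erase ℓ := fun h => hkS (Finset.erase_subset _ _ h)
            rw [load_insert ν d hkSe]
            have hback : load ν d S t
                = load ν d (S.erase ℓ) t + if d ℓ ≤ t then ν ℓ else 0 := by
              conv_lhs => rw [← Finset.insert_erase hℓS]
              exact load_insert ν d (Finset.notMem_erase _ _) t
            have hdℓk : d ℓ ≤ d k := hsort (hle_k ℓ (hbound ℓ hℓmem))
            have hite : (if d k ≤ t then ν k else 0) ≤ (if d ℓ ≤ t then ν ℓ else 0) := by
              by_cases hc : d k ≤ t
              · rw [if_pos hc, if_pos (hdℓk.trans hc)]; exact hνkℓ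
              · rw [if_neg hc]; omega
            have := ihf t ht
            omega
        -- membership bounds
        have hbound' : ∀ i ∈ Sfun (n+1), i.val < n + 1 := by
          rw [hS1]
          exact fun i hi => hbound i (Finset.erase_subset _ _ hi)
        refine ⟨hfS', hbound', ?_⟩
        intro W hW hfW
        by_cases hkW : k ∈ W
        · -- k ∈ W : use the erase of k
          have hV : ∀ i ∈ W.erase k, i.val < n := by
            intro i hi
            rw [Finset.mem_erase] at hi
            have h1 := hW i hi.2
            have h2 : i.val ≠ n := fun h => hi.1 (Fin.ext (by simp [hkdef, h]))
            omega
          have hfV : ∀ t ∈ Finset.Icc 1 T, load ν d (W.erase k) t ≤ cap A t :=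
            fun t ht => (load_mono_set ν d (Finset.erase_subset _ _) t).trans (hfW t ht)
          obtain ⟨R, hRS, hRcard, hRsum⟩ := ihex (W.erase k) hV hfV
          have hWcard : W.card ≤ S.card := by
            by_contra hcon
            push_neg at hcon
            have hRc : S.card ≤ R.card := by
              rw [hRcard, Finset.card_erase_of_mem hkW]
              have := Finset.card_pos.2 ⟨k, hkW⟩
              omega
            have hReq : R = S := Finset.eq_of_subset_of_card_le hRS hRc
            have hWsum : ∑ i ∈ W, ν i ≤ cap A t0 := by
              have h1 := hfW t0 ht0
              rwa [load_eq_sum ν d (fun i hi =>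
                le_trans (hsort (hle_k i (hW i hi))) hdk0)] at h1
            have hsum2 : ∑ i ∈ insert k S, ν i ≤ ∑ i ∈ W, ν i := by
              rw [Finset.sum_insert hkS]
              have h3 : ∑ i ∈ W.erase k, ν i + ν k = ∑ i ∈ W, ν i :=
                Finset.sum_erase_add _ _ hkW
              have h4 : ∑ i ∈ S, ν i ≤ ∑ i ∈ W.erase k, ν i := hReq ▸ hRsum
              omega
            omega
          have hRlt : R.card < S.card := by
            rw [hRcard, Finset.card_erase_of_mem hkW]
            have := Finset.card_pos.2 ⟨k, hkW⟩
            omega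
          have hex : ∃ j ∈ S, j ∉ R := by
            by_contra hcon
            push_neg at hcon
            have : S ⊆ R := hcon
            have := Finset.card_le_card this
            omega
          obtain ⟨j, hjS, hjR⟩ := hex
          have hνj : ν j ≤ ν ℓ := hℓmax j (Finset.mem_insert_of_mem hjS)
          by_cases hℓk : ℓ = k
          · -- removed element is k itself : Sfun (n+1) = S
            have hSeq : Sfun (n+1) = S := by rw [hS1, hℓk, Finset.erase_insert hkS]
            refine ⟨insert j R, ?_, ?_, ?_⟩
            · rw [hSeq]; exact Finset.insert_subset hjS hRS
            · rw [Finset.card_insert_of_notMem hjR, hRcard,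
                Finset.card_erase_of_mem hkW]
              have := Finset.card_pos.2 ⟨k, hkW⟩
              omega
            · rw [Finset.sum_insert hjR]
              have h3 : ∑ i ∈ W.erase k, ν i + ν k = ∑ i ∈ W, ν i :=
                Finset.sum_erase_add _ _ hkW
              have hνjk : ν j ≤ ν k := hℓk ▸ hνj
              omega
          · -- removed element ℓ ∈ S
            have hℓS : ℓ ∈ S := (Finset.mem_insert.1 hℓmem).resolve_left hℓk
            have hkS' : k ∈ Sfun (n+1) := by
              rw [hS1]
              exact Finset.mem_erase.2 ⟨fun h => hℓk h.symm, Finset.mem_insert_self _ _⟩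
            -- build R₁ ⊆ S with ℓ ∉ R₁, same card as R, sum ≤ sum R
            obtain ⟨R₁, hR₁S, hℓR₁, hR₁card, hR₁sum⟩ :
                ∃ R₁ ⊆ S, ℓ ∉ R₁ ∧ R₁.card = R.card ∧ ∑ i ∈ R₁, ν i ≤ ∑ i ∈ R, ν i := by
              by_cases hℓR : ℓ ∈ R
              · have hjℓ : j ≠ ℓ := fun h => hjR (h ▸ hℓR)
                refine ⟨insert j (R.erase ℓ), ?_, ?_, ?_, ?_⟩
                · exact Finset.insert_subset hjS ((Finset.erase_subset _ _).trans hRS)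
                · intro h
                  rcases Finset.mem_insert.1 h with h | h
                  · exact hjℓ h.symm
                  · exact Finset.notMem_erase _ _ h
                · rw [Finset.card_insert_of_notMem
                      (fun h => hjR (Finset.erase_subset _ _ h)),
                    Finset.card_erase_of_mem hℓR]
                  have := Finset.card_pos.2 ⟨ℓ, hℓR⟩
                  omega
                · rw [Finset.sum_insert (fun h => hjR (Finset.erase_subset _ _ h))]
                  have h3 : ∑ i ∈ R.erase ℓ, ν i + ν ℓ = ∑ i ∈ R, ν i :=
                    Finset.sum_erase_add _ _ hℓR
                  omega
              · exact ⟨R, hRS, hℓR, rfl, le_rfl⟩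
            have hkR₁ : k ∉ R₁ := fun h => hkS (hR₁S h)
            refine ⟨insert k R₁, ?_, ?_, ?_⟩
            · rw [hS1]
              refine Finset.insert_subset (hS1 ▸ hkS') ?_
              intro i hi
              exact Finset.mem_erase.2 ⟨fun h => hℓR₁ (h ▸ hi),
                Finset.mem_insert_of_mem (hR₁S hi)⟩
            · rw [Finset.card_insert_of_notMem hkR₁, hR₁card, hRcard,
                Finset.card_erase_of_mem hkW]
              have := Finset.card_pos.2 ⟨k, hkW⟩
              omega
            · rw [Finset.sum_insert hkR₁]
              have h3 : ∑ i ∈ W.erase k, ν i + ν k = ∑ i ∈ W, ν i :=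
                Finset.sum_erase_add _ _ hkW
              omega
        · -- k ∉ W
          have hWn : ∀ i ∈ W, i.val < n := by
            intro i hi
            have h1 := hW i hi
            have h2 : i.val ≠ n := fun h => hkW (by
              have : i = k := Fin.ext (by simp [hkdef, h])
              rwa [this] at hi)
            omega
          obtain ⟨R, hRS, hRcard, hRsum⟩ := ihex W hWn hfW
          by_cases hℓk : ℓ = k
          · have hSeq : Sfun (n+1) = S := by rw [hS1, hℓk, Finset.erase_insert hkS]
            exact ⟨R, hSeq ▸ hRS, hRcard, hRsum⟩
          · have hℓS : ℓ ∈ S := (Finset.mem_insert.1 hℓmem).resolve_left hℓk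
            by_cases hℓR : ℓ ∈ R
            · have hkR : k ∉ R.erase ℓ :=
                fun h => hkS (hRS (Finset.erase_subset _ _ h))
              refine ⟨insert k (R.erase ℓ), ?_, ?_, ?_⟩
              · rw [hS1]
                refine Finset.insert_subset
                  (Finset.mem_erase.2 ⟨fun h => hℓk h.symm,
                    Finset.mem_insert_self _ _⟩) ?_
                intro i hi
                rw [Finset.mem_erase] at hi
                exact Finset.mem_erase.2 ⟨hi.1, Finset.mem_insert_of_mem (hRS hi.2)⟩
              · rw [Finset.card_insert_of_notMem hkR,
                  Finset.card_erase_of_mem hℓR, hRcard]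
                have h5 := Finset.card_pos.2 ⟨ℓ, hℓR⟩
                have h6 : W.card = R.card := hRcard.symm
                omega
              · rw [Finset.sum_insert hkR]
                have h3 : ∑ i ∈ R.erase ℓ, ν i + ν ℓ = ∑ i ∈ R, ν i :=
                  Finset.sum_erase_add _ _ hℓR
                have hνℓk := hℓmax k (Finset.mem_insert_self _ _)
                omega
            · refine ⟨R, ?_, hRcard, hRsum⟩
              rw [hS1]
              intro i hi
              exact Finset.mem_erase.2 ⟨fun h => hℓR (h ▸ hi),
                Finset.mem_insert_of_mem (hRS hi)⟩
  -- now derive the statement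
  intro k
  obtain ⟨hf, hb, hex⟩ := key (k.val + 1) k.isLt
  refine ⟨feasible_of_load_le hν hd hsort hf, ?_, ?_⟩
  · intro i hi
    exact Fin.le_def.2 (by have := hb i hi; omega)
  · intro W hW hWfeas
    obtain ⟨R, hRS, hRcard, _⟩ := hex W
      (fun i hi => by have := Fin.le_def.1 (hW i hi); omega)
      (load_le_cap hWfeas)
    rw [← hRcard]
    exact Finset.card_le_card hRS
end

section
/- Assume the users are indexed in nondecreasing order of deadlines, i.e. d 1 ≤ d 2 ≤ … ≤ d U, and let S^u (u = 0,…,U) be defined by the recursion: S⁰ = ∅; S^u = S^{u−1} ∪ {u} if this set is feasible, and otherwise S^u = (S^{u−1} ∪ {u}) \ {ℓ_u} with ℓ_u an element of S^{u−1} ∪ {u} of maximum ν. Then for all u ≤ ℓ ≤ U there exists a feasible set W ⊆ {1,…,ℓ} of maximum cardinality among feasible subsets of {1,…,ℓ} such that W ∩ {1,…,u} ⊆ S^u. (Intermediate claim in the proof of Theorem 1.) -/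
open Finset

section Counting

variable {ι : Type*}

lemma card_filter_Icc_le_add (p : ℕ → Prop) [DecidablePred p] (r t : ℕ) :
    #{s ∈ Icc 1 t | p s} ≤ #{s ∈ Icc 1 r | p s} + (t - r) := by
  calc #{s ∈ Icc 1 t | p s} ≤ #({s ∈ Icc 1 r | p s} ∪ Ioc r t) := by
        apply card_le_card
        intro s
        simp only [mem_filter, mem_Icc, mem_union, mem_Ioc]
        rintro ⟨⟨h1, h2⟩, hp⟩
        by_cases hs : s ≤ r
        exacts [Or.inl ⟨⟨h1, hs⟩, hp⟩, Or.inr ⟨by omega, h2⟩]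
    _ ≤ _ := by grw [card_union_le, Nat.card_Ioc]

lemma card_filter_Icc_update (σ : ℕ → Option ι) (o : Option ι) (p : Option ι → Prop)
    [DecidablePred p] (T : ℕ) :
    #{s ∈ Icc 1 (T + 1) | p (Function.update σ (T + 1) o s)} =
      #{s ∈ Icc 1 T | p (σ s)} + if p o then 1 else 0 := by
  rw [← insert_Icc_right_eq_Icc_add_one (by omega), filter_insert, Function.update_self]
  have : {s ∈ Icc 1 T | p (Function.update σ (T + 1) o s)} = {s ∈ Icc 1 T | p (σ s)} :=
    filter_congr fun s hs => by rw [Function.update_of_ne (by grind)]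
  split_ifs <;> simp [this]

lemma card_filter_ne_none_eq_sum [Fintype ι] [DecidableEq ι] (σ : ℕ → Option ι)
    (X : Finset ℕ) : #{s ∈ X | σ s ≠ none} = ∑ i, #{s ∈ X | σ s = some i} := by
  have h := card_eq_sum_card_fiberwise (f := σ) (s := X) (t := univ) fun _ _ => mem_univ _
  rw [Fintype.sum_option, ← card_filter_add_card_filter_not (s := X) (σ · = none)] at h
  exact Nat.add_left_cancel h

end Counting

section Schedule

variable {ι : Type*} [Fintype ι] [DecidableEq ι]

/-- `Serves` without its condition (i), for a work vector `w` in place of `ν` on `S`. -/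
structure IsSchedule (T : ℕ) (w d : ι → ℕ) (A : ℕ → ℕ) (σ : ℕ → Option ι) : Prop where
  card_slots : ∀ i, #{s ∈ Icc 1 T | σ s = some i} = w i
  le_deadline : ∀ i, ∀ s ∈ Icc 1 T, σ s = some i → s ≤ d i
  card_busy_le : ∀ t ∈ Icc 1 T, #{s ∈ Icc 1 t | σ s ≠ none} ≤ ∑ s ∈ Icc 1 t, A s

lemma IsSchedule.update {T : ℕ} {w w' d : ι → ℕ} {A : ℕ → ℕ} {σ : ℕ → Option ι}
    (hσ : IsSchedule T w' d A σ) {o : Option ι}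
    (hw : ∀ i, w i = w' i + if o = some i then 1 else 0)
    (ho : ∀ i, o = some i → T + 1 ≤ d i) (hA : ∑ i, w i ≤ ∑ s ∈ Icc 1 (T + 1), A s) :
    IsSchedule (T + 1) w d A (Function.update σ (T + 1) o) := by
  have card_slots : ∀ i, #{s ∈ Icc 1 (T + 1) | Function.update σ (T + 1) o s = some i} = w i :=
    fun i => by rw [card_filter_Icc_update σ o (· = some i), hσ.card_slots, hw]
  refine ⟨card_slots, fun i s hs hsi => ?_, fun t ht => ?_⟩
  · rcases eq_or_ne s (T + 1) with rfl | hsT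
    · exact ho i (by rwa [Function.update_self] at hsi)
    · rw [Function.update_of_ne hsT] at hsi
      exact hσ.le_deadline i s (by grind) hsi
  · rcases eq_or_lt_of_le (mem_Icc.1 ht).2 with rfl | htT
    · simpa only [card_filter_ne_none_eq_sum, card_slots] using hA
    · have : {s ∈ Icc 1 t | Function.update σ (T + 1) o s ≠ none} =
          {s ∈ Icc 1 t | σ s ≠ none} :=
        filter_congr fun s hs => by rw [Function.update_of_ne (by grind)]
      rw [this]
      exact hσ.card_busy_le t (by grind)

/-- The hypothesis `htotal` asks the whole of `w`, not only the work due by `T`, to fit by `T`;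
in this form it survives the step from `T + 1` to `T`, where the deadlines are left unchanged. -/
theorem exists_isSchedule (A : ℕ → ℕ) (d : ι → ℕ) (T : ℕ) (w : ι → ℕ)
    (hload : ∀ t < T, ∀ r ≤ t, ∑ i with d i ≤ t, w i + r ≤ ∑ s ∈ Icc 1 r, A s + t)
    (htotal : ∀ r ≤ T, ∑ i, w i + r ≤ ∑ s ∈ Icc 1 r, A s + T) :
    ∃ σ, IsSchedule T w d A σ := by
  induction T generalizing w with
  | zero =>
    have hw : ∀ i, w i = 0 := by simpa using htotal 0 le_rfl
    exact ⟨fun _ => none, ⟨by simp [hw], by simp, by simp⟩⟩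
  | succ T ih =>
    have hA : ∑ i, w i ≤ ∑ s ∈ Icc 1 (T + 1), A s := by
      have := htotal (T + 1) le_rfl
      omega
    by_cases h : ∃ j, 0 < w j ∧ T + 1 ≤ d j
    · obtain ⟨j, hj, hdj⟩ := h
      set w' := Function.update w j (w j - 1)
      have hw : ∀ i, w i = w' i + if some j = some i then 1 else 0 := fun i => by
        rcases eq_or_ne i j with rfl | hij
        · simp only [w', Function.update_self, ↓reduceIte]
          omega
        · simp [w', hij, Ne.symm hij]
      have hsum : ∑ i, w i = ∑ i, w' i + 1 := by
        simp only [hw, sum_add_distrib, Option.some_inj, sum_ite_eq, mem_univ, if_true]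
      have hw' : ∀ t, ∑ i with d i ≤ t, w' i ≤ ∑ i with d i ≤ t, w i :=
        fun t => sum_le_sum fun i _ => (hw i).symm ▸ Nat.le_add_right _ _
      obtain ⟨σ, hσ⟩ := ih w'
        (fun t ht r hr => (Nat.add_le_add_right (hw' t) r).trans (hload t (by omega) r hr))
        (fun r hr => by have := htotal r (by omega); omega)
      exact ⟨_, hσ.update hw (by simpa using hdj) hA⟩
    · push Not at h
      have htot : ∑ i, w i = ∑ i with d i ≤ T, w i :=
        (sum_filter_of_ne fun i _ hi => by have := h i (Nat.pos_of_ne_zero hi); omega).symm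
      obtain ⟨σ, hσ⟩ := ih w (fun t ht r hr => hload t (by omega) r hr)
        (fun r hr => htot ▸ hload T (by omega) r hr)
      exact ⟨_, hσ.update (o := none) (by simp) (by simp) hA⟩

end Schedule

section Load

variable {ι : Type*} {T : ℕ} {ν d : ι → ℕ} {A : ℕ → ℕ}

def load (ν d : ι → ℕ) (S : Finset ι) (t : ℕ) : ℕ :=
  ∑ i ∈ S with d i ≤ t, ν i

/-- The users due by `t` fit into the at most `∑ s ∈ Icc 1 r, A s` busy slots among the first
`r` plus one slot per time in `(r, t]`. -/
def LoadBounded (T : ℕ) (ν d : ι → ℕ) (A : ℕ → ℕ) (S : Finset ι) : Prop :=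
  ∀ t ≤ T, ∀ r ≤ t, load ν d S t + r ≤ ∑ s ∈ Icc 1 r, A s + t

lemma load_mono {S S' : Finset ι} (h : S' ⊆ S) (t : ℕ) : load ν d S' t ≤ load ν d S t :=
  sum_le_sum_of_subset (filter_subset_filter _ h)

lemma load_insert_le [DecidableEq ι] (m : ι) (S : Finset ι) (t : ℕ) :
    load ν d (insert m S) t ≤ load ν d S t + ν m := by
  by_cases hm : m ∈ S
  · rw [insert_eq_of_mem hm]
    omega
  · unfold load
    rw [filter_insert]
    split_ifs
    · rw [sum_insert (by simp [hm])]
      omega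
    · omega

lemma load_insert_erase_le [DecidableEq ι] {W : Finset ι} {ℓ m : ι} {t : ℕ} (hℓ : ℓ ∈ W)
    (hν : ν m ≤ ν ℓ) (hdℓ : d ℓ ≤ t) : load ν d (insert m (W.erase ℓ)) t ≤ load ν d W t := by
  calc load ν d (insert m (W.erase ℓ)) t ≤ load ν d (W.erase ℓ) t + ν ℓ :=
        (load_insert_le m _ t).trans (Nat.add_le_add_left hν _)
    _ = load ν d W t := by
        rw [load, load, filter_erase, sum_erase_add _ _ (mem_filter.2 ⟨hℓ, hdℓ⟩)]

lemma loadBounded_empty : LoadBounded T ν d A ∅ := fun t _ r hr => by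
  simp only [load, filter_empty, sum_empty]
  omega

lemma LoadBounded.mono {S S' : Finset ι} (hS : LoadBounded T ν d A S) (h : S' ⊆ S) :
    LoadBounded T ν d A S' := fun t ht r hr =>
  (Nat.add_le_add_right (load_mono h t) r).trans (hS t ht r hr)

/-- Since the condition is checked one `t` at a time, the times before `d ℓ` may be covered by a
different set `Q`. -/
lemma LoadBounded.insert_erase [DecidableEq ι] {W Q : Finset ι} {ℓ m : ι}
    (hW : LoadBounded T ν d A W) (hQ : LoadBounded T ν d A Q) (hℓ : ℓ ∈ W) (hν : ν m ≤ ν ℓ)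
    (hWQ : ∀ i ∈ insert m (W.erase ℓ), d i < d ℓ → i ∈ Q) :
    LoadBounded T ν d A (insert m (W.erase ℓ)) := by
  intro t ht r hr
  rcases le_or_gt (d ℓ) t with hdℓ | hdℓ
  · exact (Nat.add_le_add_right (load_insert_erase_le hℓ hν hdℓ) r).trans (hW t ht r hr)
  · have : load ν d (insert m (W.erase ℓ)) t ≤ load ν d Q t := by
      refine sum_le_sum_of_subset fun i hi => ?_
      rw [mem_filter] at hi ⊢
      exact ⟨hWQ i hi.1 (hi.2.trans_lt hdℓ), hi.2⟩
    exact (Nat.add_le_add_right this r).trans (hQ t ht r hr)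

end Load

section Feasibility

variable {T U : ℕ} {ν d : Fin U → ℕ} {A : ℕ → ℕ} {S : Finset (Fin U)}

lemma Serves.loadBounded {σ : ℕ → Option (Fin U)} (h : Serves T U ν d A σ S) :
    LoadBounded T ν d A S := by
  obtain ⟨-, hcard, hdl, hbusy⟩ := h
  intro t ht r hr
  have hload : load ν d S t ≤ #{s ∈ Icc 1 t | σ s ≠ none} := by
    rw [card_filter_ne_none_eq_sum]
    calc load ν d S t = ∑ i ∈ S with d i ≤ t, #{s ∈ Icc 1 t | σ s = some i} := by
          refine sum_congr rfl fun i hi => ?_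
          rw [mem_filter] at hi
          rw [← hcard i hi.1]
          congr 1
          ext s
          simp only [mem_filter, mem_Icc]
          constructor
          · rintro ⟨⟨h1, h2⟩, h3⟩
            exact ⟨⟨h1, (hdl i s (mem_Icc.2 ⟨h1, h2⟩) h3).trans hi.2⟩, h3⟩
          · rintro ⟨⟨h1, h2⟩, h3⟩
            exact ⟨⟨h1, h2.trans ht⟩, h3⟩
      _ ≤ ∑ i, #{s ∈ Icc 1 t | σ s = some i} := sum_le_sum_of_subset (subset_univ _)
  have hfirst : #{s ∈ Icc 1 r | σ s ≠ none} ≤ ∑ s ∈ Icc 1 r, A s := by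
    rcases Nat.eq_zero_or_pos r with rfl | hr0
    · simp
    · exact hbusy r (mem_Icc.2 ⟨hr0, hr.trans ht⟩)
  have := card_filter_Icc_le_add (σ · ≠ none) r t
  omega

lemma LoadBounded.feasible (hν : ∀ i, 1 ≤ ν i) (hd : ∀ i, d i ≤ T)
    (hS : LoadBounded T ν d A S) : Feasible T U ν d A S := by
  set w : Fin U → ℕ := fun i => if i ∈ S then ν i else 0
  have hw : ∀ t, ∑ i with d i ≤ t, w i = load ν d S t := fun t => by
    rw [sum_ite_mem, ← filter_mem_eq_inter, filter_filter, load]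
    congr 1
    ext i
    simp [and_comm]
  have htot : ∑ i, w i = load ν d S T := by
    rw [← hw, filter_true_of_mem fun i _ => hd i]
  obtain ⟨σ, hσ⟩ := exists_isSchedule A d T w (fun t ht r hr => hw t ▸ hS t ht.le r hr)
    (fun r hr => htot ▸ hS T le_rfl r hr)
  refine ⟨σ, fun i => ?_, fun i hi => (hσ.card_slots i).trans (if_pos hi),
    hσ.le_deadline, hσ.card_busy_le⟩
  rw [← filter_nonempty_iff, ← card_pos, hσ.card_slots]
  by_cases hi : i ∈ S <;> simp [w, hi, show 0 < ν i from hν i]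

lemma feasible_iff_loadBounded (hν : ∀ i, 1 ≤ ν i) (hd : ∀ i, d i ≤ T) :
    Feasible T U ν d A S ↔ LoadBounded T ν d A S :=
  ⟨fun ⟨_, h⟩ => h.loadBounded, fun h => h.feasible hν hd⟩

end Feasibility

section Greedy

variable {ι : Type*} [DecidableEq ι] {T : ℕ} {ν d : ι → ℕ} {A : ℕ → ℕ}

def IsGreedyStep (F : Finset ι → Prop) (ν : ι → ℕ) (S : Finset ι) (k : ι) (S' : Finset ι) :
    Prop :=
  (F (insert k S) → S' = insert k S) ∧
  (¬ F (insert k S) →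
    ∃ ℓ ∈ insert k S, (∀ i ∈ insert k S, ν i ≤ ν ℓ) ∧ S' = (insert k S).erase ℓ)

lemma IsGreedyStep.subset {F : Finset ι → Prop} {S S' : Finset ι} {k : ι}
    (h : IsGreedyStep F ν S k S') : S' ⊆ insert k S := by
  by_cases hF : F (insert k S)
  · rw [h.1 hF]
  · obtain ⟨ℓ, -, -, rfl⟩ := h.2 hF
    exact erase_subset _ _

lemma IsGreedyStep.loadBounded {S S' : Finset ι} {k : ι}
    (h : IsGreedyStep (LoadBounded T ν d A) ν S k S') (hS : LoadBounded T ν d A S)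
    (hk : k ∉ S) (hdk : ∀ i ∈ S, d i ≤ d k) : LoadBounded T ν d A S' := by
  by_cases hF : LoadBounded T ν d A (insert k S)
  · rwa [h.1 hF]
  obtain ⟨ℓ, hℓ, hmax, rfl⟩ := h.2 hF
  rcases eq_or_ne ℓ k with rfl | hℓk
  · rwa [erase_insert hk]
  have hℓS : ℓ ∈ S := (mem_insert.1 hℓ).resolve_left hℓk
  rw [erase_insert_of_ne hℓk.symm]
  refine hS.insert_erase hS hℓS (hmax k (mem_insert_self k S)) fun i hi hdi => ?_
  rcases mem_insert.1 hi with rfl | hi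
  · exact absurd (hdk ℓ hℓS) (not_le.2 hdi)
  · exact mem_of_mem_erase hi

end Greedy

section GreedySequence

variable {U T : ℕ} {ν d : Fin U → ℕ} {A : ℕ → ℕ}

def IsMaxCardBelow (F : Finset (Fin U) → Prop) (l : ℕ) (W : Finset (Fin U)) : Prop :=
  F W ∧ (∀ i ∈ W, (i : ℕ) < l) ∧
    ∀ W' : Finset (Fin U), (∀ i ∈ W', (i : ℕ) < l) → F W' → #W' ≤ #W

lemma exists_isMaxCardBelow {F : Finset (Fin U) → Prop} (hF : F ∅) (l : ℕ) :
    ∃ W, IsMaxCardBelow F l W := by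
  classical
  obtain ⟨W, hW, hmax⟩ := exists_max_image {W : Finset (Fin U) | (∀ i ∈ W, (i : ℕ) < l) ∧ F W}
    card ⟨∅, by simp [hF]⟩
  rw [mem_filter] at hW
  exact ⟨W, hW.2.2, hW.2.1, fun W' hl hF' => hmax W' (mem_filter.2 ⟨mem_univ _, hl, hF'⟩)⟩

lemma IsGreedyStep.exists_isMaxCardBelow (hsort : Monotone d) {S S' : Finset (Fin U)}
    {k : Fin U} {l : ℕ} (h : IsGreedyStep (LoadBounded T ν d A) ν S k S')
    (hS : ∀ i ∈ S, i < k) (hS' : LoadBounded T ν d A S') (hkl : (k : ℕ) < l)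
    {W : Finset (Fin U)} (hW : IsMaxCardBelow (LoadBounded T ν d A) l W)
    (hWS : ∀ i ∈ W, i < k → i ∈ S) :
    ∃ W', IsMaxCardBelow (LoadBounded T ν d A) l W' ∧ ∀ i ∈ W', i ≤ k → i ∈ S' := by
  obtain ⟨hWF, hWl, hWmax⟩ := hW
  have hPk : ∀ i ∈ insert k S, i ≤ k := fun i hi =>
    (mem_insert.1 hi).elim le_of_eq fun hi => (hS i hi).le
  have hWP : ∀ i ∈ W, i ≤ k → i ∈ insert k S := fun i hi hik =>
    hik.lt_or_eq.elim (fun hik => mem_insert_of_mem (hWS i hi hik))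
      fun hik => hik ▸ mem_insert_self k S
  by_cases hP : LoadBounded T ν d A (insert k S)
  · exact ⟨W, ⟨hWF, hWl, hWmax⟩, by rw [h.1 hP]; exact hWP⟩
  obtain ⟨ℓ, hℓP, hmax, rfl⟩ := h.2 hP
  by_cases hℓW : ℓ ∉ W
  · exact ⟨W, ⟨hWF, hWl, hWmax⟩, fun i hi hik =>
      mem_erase.2 ⟨ne_of_mem_of_not_mem hi hℓW, hWP i hi hik⟩⟩
  rw [not_not] at hℓW
  obtain ⟨m, hmP, hmW⟩ : ∃ m ∈ insert k S, m ∉ W :=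
    not_subset.1 fun hPW => hP (hWF.mono hPW)
  have hW'P : ∀ i ∈ insert m (W.erase ℓ), i ≤ k → i ∈ (insert k S).erase ℓ := by
    intro i hi hik
    rcases mem_insert.1 hi with rfl | hi
    · exact mem_erase.2 ⟨fun h => hmW (h ▸ hℓW), hmP⟩
    · exact mem_erase.2 ⟨ne_of_mem_erase hi, hWP i (mem_of_mem_erase hi) hik⟩
  refine ⟨insert m (W.erase ℓ), ⟨?_, fun i hi => ?_, fun W' hl hF' => ?_⟩, hW'P⟩
  · exact hWF.insert_erase hS' hℓW (hmax m hmP) fun i hi hdi =>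
      hW'P i hi ((hsort.reflect_lt hdi).le.trans (hPk ℓ hℓP))
  · rcases mem_insert.1 hi with rfl | hi
    · exact lt_of_le_of_lt (hPk i hmP) hkl
    · exact hWl i (mem_of_mem_erase hi)
  · rw [card_insert_of_notMem fun h => hmW (mem_of_mem_erase h), card_erase_add_one hℓW]
    exact hWmax W' hl hF'

variable {S : ℕ → Finset (Fin U)}

lemma greedy_val_lt {F : Finset (Fin U) → Prop} (h0 : S 0 = ∅)
    (hS : ∀ k : Fin U, IsGreedyStep F ν (S k) k (S (k + 1))) :
    ∀ u, ∀ i ∈ S u, (i : ℕ) < u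
  | 0, i, hi => by simp [h0] at hi
  | u + 1, i, hi => by
    by_cases hu : u < U
    · rcases mem_insert.1 ((hS ⟨u, hu⟩).subset hi) with rfl | hi
      · exact Nat.lt_succ_self u
      · exact (greedy_val_lt h0 hS u i hi).trans (Nat.lt_succ_self u)
    · have := i.isLt
      omega

lemma greedy_loadBounded (hsort : Monotone d) (h0 : S 0 = ∅)
    (hS : ∀ k : Fin U, IsGreedyStep (LoadBounded T ν d A) ν (S k) k (S (k + 1))) :
    ∀ u ≤ U, LoadBounded T ν d A (S u)
  | 0, _ => h0 ▸ loadBounded_empty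
  | u + 1, hu => (hS ⟨u, hu⟩).loadBounded (greedy_loadBounded hsort h0 hS u (by omega))
      (fun hk => (greedy_val_lt h0 hS u _ hk).false)
      (fun i hi => hsort (Fin.le_iff_val_le_val.2 (greedy_val_lt h0 hS u i hi).le))

theorem greedy_exists_isMaxCardBelow (hsort : Monotone d) (h0 : S 0 = ∅)
    (hS : ∀ k : Fin U, IsGreedyStep (LoadBounded T ν d A) ν (S k) k (S (k + 1)))
    {l : ℕ} (hlU : l ≤ U) :
    ∀ u ≤ l, ∃ W, IsMaxCardBelow (LoadBounded T ν d A) l W ∧ ∀ i ∈ W, (i : ℕ) < u → i ∈ S u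
  | 0, _ => (exists_isMaxCardBelow loadBounded_empty l).imp fun _ hW => ⟨hW, by simp⟩
  | u + 1, hul => by
    obtain ⟨W, hW, hWS⟩ := greedy_exists_isMaxCardBelow hsort h0 hS hlU u (by omega)
    obtain ⟨W', hW', hW'S⟩ := (hS ⟨u, by omega⟩).exists_isMaxCardBelow hsort
      (greedy_val_lt h0 hS u) (greedy_loadBounded hsort h0 hS (u + 1) (by omega)) hul hW hWS
    exact ⟨W', hW', fun i hi hiu => hW'S i hi (Nat.lt_succ_iff.1 hiu)⟩

end GreedySequence

/-- Indices are 0-based: `i : Fin U` lies in `{1,…,m}` iff `(i : ℕ) < m`. -/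
theorem stmt2 (T U : ℕ) (ν d : Fin U → ℕ) (A : ℕ → ℕ)
    (hν : ∀ i, 1 ≤ ν i) (hd : ∀ i, d i ∈ Finset.Icc 1 T)
    (hsort : Monotone d)
    (Sfun : ℕ → Finset (Fin U))
    (h0 : Sfun 0 = ∅)
    (hrec : ∀ k : Fin U,
      (Feasible T U ν d A (insert k (Sfun k.val)) →
        Sfun (k.val + 1) = insert k (Sfun k.val)) ∧
      (¬ Feasible T U ν d A (insert k (Sfun k.val)) →
        ∃ ℓ ∈ insert k (Sfun k.val),
          (∀ i ∈ insert k (Sfun k.val), ν i ≤ ν ℓ) ∧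
          Sfun (k.val + 1) = (insert k (Sfun k.val)).erase ℓ)) :
    ∀ u l : ℕ, u ≤ l → l ≤ U →
      ∃ W : Finset (Fin U),
        Feasible T U ν d A W ∧
        (∀ i ∈ W, (i : ℕ) < l) ∧
        (∀ W' : Finset (Fin U), (∀ i ∈ W', (i : ℕ) < l) →
          Feasible T U ν d A W' → W'.card ≤ W.card) ∧
        (∀ i ∈ W, (i : ℕ) < u → i ∈ Sfun u) := by
  have hF : Feasible T U ν d A = LoadBounded T ν d A :=
    funext fun _ => propext (feasible_iff_loadBounded hν fun i => (mem_Icc.1 (hd i)).2)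
  rw [hF] at hrec ⊢
  intro u l hul hlU
  obtain ⟨W, ⟨hWF, hWl, hWmax⟩, hWu⟩ := greedy_exists_isMaxCardBelow hsort h0 hrec hlU u hul
  exact ⟨W, hWF, hWl, hWmax, hWu⟩
end

section
/- Let σ be a schedule serving a set S, let i ∈ S, and let Sᵢ and Cᵢ be respectively the smallest and largest slot at which i appears in σ. Assume that every slot t with Sᵢ ≤ t ≤ Cᵢ satisfies σ t = some i or σ t = none. Define σ' by: σ' t = some i for t ∈ {Cᵢ − ν i + 1, …, Cᵢ}, σ' t = none for t ∈ {Sᵢ, …, Cᵢ − ν i}, and σ' t = σ t for all other t. Then σ' serves S, and the slots assigned to i in σ' form a set of consecutive integers. (The single-user right-justification step in the proof of Lemma 6.) -/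
/-!
Inside `[Sᵢ, Cᵢ]` user `i` only shares its window with idle slots, so packing its `ν i` slots
at the right end of the window touches no other user. Every prefix `{1, …, t}` then contains
at most as many slots of `i` as before: the block `{Cᵢ − ν i + 1, …, Cᵢ}` minimizes the number
of elements in a prefix among all `ν i`-element subsets of `{0, …, Cᵢ}`. Since the busy slots
of the other users are unchanged, the energy constraints survive, and the deadline of `i` is
respected because the block still ends at `Cᵢ`.
-/

open Finset

theorem card_filter_Icc_sub_card_le {F : Finset ℕ} {C : ℕ} (hF : F ⊆ Iic C) (t : ℕ) :
    #((Icc (C - #F + 1) C).filter (· ≤ t)) ≤ #(F.filter (· ≤ t)) := by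
  have hlate : #(F.filter (¬ · ≤ t)) ≤ C - t := by
    calc #(F.filter (¬ · ≤ t)) ≤ #(Ioc t C) := card_le_card fun x hx => by
          simp only [mem_filter] at hx
          simpa [not_le.mp hx.2] using hF hx.1
      _ = C - t := Nat.card_Ioc t C
  have hsplit := card_filter_add_card_filter_not (s := F) (· ≤ t)
  have hblock : (Icc (C - #F + 1) C).filter (· ≤ t) = Icc (C - #F + 1) (min C t) := by
    ext x
    simp only [mem_filter, mem_Icc, le_min_iff]
    tauto
  rw [hblock, Nat.card_Icc]
  omega

theorem filter_Icc_one_eq_filter_filter {p : ℕ → Prop} [DecidablePred p] {t T : ℕ}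
    (ht : t ≤ T) : (Icc 1 t).filter p = ((Icc 1 T).filter p).filter (· ≤ t) := by
  ext s
  simp only [mem_filter, mem_Icc]
  constructor
  · rintro ⟨⟨h1, h2⟩, hp⟩
    exact ⟨⟨⟨h1, h2.trans ht⟩, hp⟩, h2⟩
  · rintro ⟨⟨⟨h1, -⟩, hp⟩, h2⟩
    exact ⟨⟨h1, h2⟩, hp⟩

section Schedule

variable {α : Type*}

theorem card_filter_ne_none [DecidableEq α] (σ : ℕ → Option α) (i : α) (I : Finset ℕ) :
    #(I.filter (σ · ≠ none)) =
      #(I.filter (σ · = some i)) + #(I.filter fun s => σ s ≠ none ∧ σ s ≠ some i) := by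
  rw [← card_union_of_disjoint (disjoint_filter.mpr fun _ _ h h' => h'.2 h), ← filter_or]
  congr 1
  apply filter_congr
  intro s _
  by_cases h : σ s = some i <;> simp [h]

theorem ne_none_and_ne_some_iff {σ σ' : ℕ → Option α} {i : α}
    (hothers : ∀ u ≠ i, ∀ t, σ' t = some u ↔ σ t = some u) (t : ℕ) :
    (σ' t ≠ none ∧ σ' t ≠ some i) ↔ (σ t ≠ none ∧ σ t ≠ some i) := by
  have key : ∀ o : Option α, (o ≠ none ∧ o ≠ some i) ↔ ∃ u ≠ i, o = some u := by
    intro o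
    cases o <;> simp [eq_comm]
  simp only [key]
  exact exists_congr fun u => and_congr_right fun hu => hothers u hu t

def packRight (σ : ℕ → Option α) (i : α) (a b n : ℕ) : ℕ → Option α := fun t =>
  if b - n + 1 ≤ t ∧ t ≤ b then some i
  else if a ≤ t ∧ t ≤ b then none
  else σ t

theorem packRight_eq_some_iff_of_ne {σ : ℕ → Option α} {i u : α} {a b n : ℕ}
    (hgap : ∀ t, a ≤ t → t ≤ b → σ t = some i ∨ σ t = none) (hn : a + n ≤ b + 1)
    (hu : u ≠ i) (t : ℕ) : packRight σ i a b n t = some u ↔ σ t = some u := by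
  have hwindow : a ≤ t → t ≤ b → σ t ≠ some u := by
    intro h1 h2
    rcases hgap t h1 h2 with h | h <;> simp [h, Ne.symm hu]
  unfold packRight
  split_ifs with hblock hwin
  · simpa [Ne.symm hu] using hwindow (by omega) hblock.2
  · simpa using hwindow hwin.1 hwin.2
  · rfl

theorem filter_packRight_eq_some_self [DecidableEq α] {σ : ℕ → Option α} {i : α} {a b T : ℕ} (n : ℕ)
    (hσ : (Icc 1 T).filter (σ · = some i) ⊆ Icc a b) (hb : b ≤ T) :
    (Icc 1 T).filter (packRight σ i a b n · = some i) = Icc (b - n + 1) b := by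
  ext t
  rw [mem_filter, mem_Icc, mem_Icc]
  unfold packRight
  constructor
  · rintro ⟨ht, h⟩
    split_ifs at h with hblock hwin
    · exact hblock
    · have := hσ (mem_filter.mpr ⟨mem_Icc.mpr ht, h⟩)
      exact absurd (mem_Icc.mp this) hwin
  · intro h
    exact ⟨⟨by omega, by omega⟩, if_pos h⟩

end Schedule

theorem Serves.of_relocate_to_Icc {T U : ℕ} {ν d : Fin U → ℕ} {A : ℕ → ℕ}
    {σ σ' : ℕ → Option (Fin U)} {S : Finset (Fin U)} {i : Fin U} {C : ℕ}
    (hσ : Serves T U ν d A σ S) (hi : i ∈ S)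
    (hothers : ∀ u ≠ i, ∀ t, σ' t = some u ↔ σ t = some u)
    (hC : ∀ t ∈ Icc 1 T, σ t = some i → t ≤ C) (hCd : C ≤ d i)
    (hσ'i : (Icc 1 T).filter (σ' · = some i) = Icc (C - ν i + 1) C) :
    Serves T U ν d A σ' S := by
  obtain ⟨hmem, hcard, hdead, henergy⟩ := hσ
  have hslots : (Icc 1 T).filter (σ · = some i) ⊆ Iic C := fun t ht => by
    rw [mem_filter] at ht
    exact mem_Iic.mpr (hC t ht.1 ht.2)
  have hνC : ν i ≤ C := by
    calc ν i = #((Icc 1 T).filter (σ · = some i)) := (hcard i hi).symm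
      _ ≤ #(Icc 1 C) := card_le_card fun t ht => by
          rw [mem_filter, mem_Icc] at ht
          exact mem_Icc.mpr ⟨ht.1.1, hC t (mem_Icc.mpr ht.1) ht.2⟩
      _ = C := by simp
  have hνpos : 0 < ν i := by
    obtain ⟨t, ht, hσt⟩ := (hmem i).mp hi
    rw [← hcard i hi]
    exact card_pos.mpr ⟨t, mem_filter.mpr ⟨ht, hσt⟩⟩
  have hmem_i : ∀ t, t ∈ Icc 1 T ∧ σ' t = some i ↔ t ∈ Icc (C - ν i + 1) C := fun t => by
    rw [← hσ'i, mem_filter]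
  refine ⟨fun u => ?_, fun u hu => ?_, fun u t ht hσ't => ?_, fun t ht => ?_⟩
  · by_cases hu : u = i
    · subst hu
      exact iff_of_true hi ⟨C, (hmem_i C).mpr (mem_Icc.mpr ⟨by omega, le_rfl⟩)⟩
    · simp only [hmem u, hothers u hu]
  · by_cases hui : u = i
    · subst hui
      rw [hσ'i, Nat.card_Icc]
      omega
    · rw [← hcard u hu]
      exact congrArg card (filter_congr fun t _ => hothers u hui t)
  · by_cases hu : u = i
    · subst hu
      exact (mem_Icc.mp ((hmem_i t).mp ⟨ht, hσ't⟩)).2.trans hCd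
    · exact hdead u t ht ((hothers u hu t).mp hσ't)
  · have htT : t ≤ T := (mem_Icc.mp ht).2
    have hprefix : #((Icc 1 t).filter (σ' · = some i)) ≤ #((Icc 1 t).filter (σ · = some i)) := by
      rw [filter_Icc_one_eq_filter_filter htT, filter_Icc_one_eq_filter_filter htT, hσ'i,
        ← hcard i hi]
      exact card_filter_Icc_sub_card_le hslots t
    calc #((Icc 1 t).filter (σ' · ≠ none))
        = #((Icc 1 t).filter (σ' · = some i)) +
            #((Icc 1 t).filter fun s => σ' s ≠ none ∧ σ' s ≠ some i) := card_filter_ne_none ..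
      _ ≤ #((Icc 1 t).filter (σ · = some i)) +
            #((Icc 1 t).filter fun s => σ s ≠ none ∧ σ s ≠ some i) := by
          rw [filter_congr fun s _ => ne_none_and_ne_some_iff hothers s]
          omega
      _ = #((Icc 1 t).filter (σ · ≠ none)) := (card_filter_ne_none ..).symm
      _ ≤ ∑ s ∈ Icc 1 t, A s := henergy t ht

theorem stmt3_general (T U : ℕ) (ν d : Fin U → ℕ) (A : ℕ → ℕ)
    (σ : ℕ → Option (Fin U)) (S : Finset (Fin U))
    (hserve : Serves T U ν d A σ S)
    (i : Fin U) (hi : i ∈ S)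
    (Si Ci : ℕ)
    (hSi : IsLeast {t | t ∈ Finset.Icc 1 T ∧ σ t = some i} Si)
    (hCi : IsGreatest {t | t ∈ Finset.Icc 1 T ∧ σ t = some i} Ci)
    (hgap : ∀ t, Si ≤ t → t ≤ Ci → σ t = some i ∨ σ t = none)
    (σ' : ℕ → Option (Fin U))
    (hσ' : σ' = fun t =>
      if Ci - ν i + 1 ≤ t ∧ t ≤ Ci then some i
      else if Si ≤ t ∧ t ≤ Ci then none
      else σ t) :
    Serves T U ν d A σ' S ∧
    (Finset.Icc 1 T).filter (fun t => σ' t = some i) = Finset.Icc (Ci - ν i + 1) Ci := by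
  obtain rfl : σ' = packRight σ i Si Ci (ν i) := hσ'
  have hwindow : (Icc 1 T).filter (σ · = some i) ⊆ Icc Si Ci := fun t ht =>
    mem_Icc.mpr ⟨hSi.2 (mem_filter.mp ht), hCi.2 (mem_filter.mp ht)⟩
  have hνi : Si + ν i ≤ Ci + 1 := by
    have := card_le_card hwindow
    rw [hserve.2.1 i hi, Nat.card_Icc] at this
    have := hSi.2 hCi.1
    omega
  have hblock := filter_packRight_eq_some_self (ν i) hwindow (mem_Icc.mp hCi.1.1).2
  refine ⟨hserve.of_relocate_to_Icc hi (fun u hu => packRight_eq_some_iff_of_ne hgap hνi hu)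
    (fun t ht hσt => hCi.2 ⟨ht, hσt⟩) (hserve.2.2.1 i Ci hCi.1.1 hCi.1.2) hblock, hblock⟩

/-- Single-user right-justification step in the proof of Lemma 6: if `i` occupies only
slots in `[Sᵢ, Cᵢ]` whose other slots are idle, then packing `i` into the last `ν i`
slots `{Cᵢ − ν i + 1, …, Cᵢ}` yields a schedule that still serves `S`, and the slots
assigned to `i` are consecutive. -/
theorem stmt3 (T U : ℕ) (ν d : Fin U → ℕ) (A : ℕ → ℕ)
    (hν : ∀ i, 1 ≤ ν i) (hd : ∀ i, d i ∈ Finset.Icc 1 T)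
    (σ : ℕ → Option (Fin U)) (S : Finset (Fin U))
    (hserve : Serves T U ν d A σ S)
    (i : Fin U) (hi : i ∈ S)
    (Si Ci : ℕ)
    (hSi : IsLeast {t | t ∈ Finset.Icc 1 T ∧ σ t = some i} Si)
    (hCi : IsGreatest {t | t ∈ Finset.Icc 1 T ∧ σ t = some i} Ci)
    (hgap : ∀ t, Si ≤ t → t ≤ Ci → σ t = some i ∨ σ t = none)
    (σ' : ℕ → Option (Fin U))
    (hσ' : σ' = fun t =>
      if Ci - ν i + 1 ≤ t ∧ t ≤ Ci then some i
      else if Si ≤ t ∧ t ≤ Ci then none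
      else σ t) :
    Serves T U ν d A σ' S ∧
    (Finset.Icc 1 T).filter (fun t => σ' t = some i) = Finset.Icc (Ci - ν i + 1) Ci :=
  stmt3_general T U ν d A σ S hserve i hi Si Ci hSi hCi hgap σ' hσ'
end

section
/- If a set S of users is feasible, then there exists a non-preemptive schedule serving S, i.e. a schedule σ' serving S such that for every u ∈ S the set of slots {t : σ' t = some u} is a set of consecutive integers. (Lemma 6 of the paper: a preemptive feasible schedule can be transformed into a non-preemptive one without discarding any scheduled user.) -/
open Finset

namespace Finset

variable (B : Finset ℕ)

lemma setOf_mem_finite : (Set.ofPred (· ∈ B)).Finite := B.finite_toSet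

lemma nth_mem_of_lt_card {k : ℕ} (hk : k < #B) : Nat.nth (· ∈ B) k ∈ B :=
  Nat.nth_mem_of_lt_card (setOf_mem_finite B) (by simpa using hk)

lemma nth_injOn : (Set.Iio #B).InjOn (Nat.nth (· ∈ B)) := by
  simpa using Nat.nth_injOn (setOf_mem_finite B)

lemma nth_add_sub_le_nth {i j : ℕ} (hij : i ≤ j) (hj : j < #B) :
    Nat.nth (· ∈ B) i + (j - i) ≤ Nat.nth (· ∈ B) j := by
  obtain ⟨k, rfl⟩ := Nat.exists_eq_add_of_le hij
  induction k with
  | zero => simp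
  | succ k ih =>
    have hlt : Nat.nth (· ∈ B) (i + k) < Nat.nth (· ∈ B) (i + (k + 1)) :=
      Nat.nth_lt_nth_of_lt_card (setOf_mem_finite B) (by omega) (by simpa using hj)
    have := ih (by omega) (by omega)
    omega

lemma nth_le_of_lt_card_filter_le {k x : ℕ} (hk : k < #{y ∈ B | y ≤ x}) :
    Nat.nth (· ∈ B) k ≤ x := by
  refine Nat.lt_succ_iff.mp (Nat.nth_lt_of_lt_count ?_)
  rw [Nat.count_eq_card_filter_range]
  convert hk using 2
  ext y
  simp [and_comm]

end Finset

section CompactBlock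

variable {ι : Type*} (B : Finset ℕ) (C ν : ι → ℕ)

/-- User `u` is given the indices `[C u - ν u, C u)` of the increasing enumeration of the busy
slots `B`; its compact block consists of the `ν u` consecutive slots ending at the last of them. -/
noncomputable def compactBlockEnd (u : ι) : ℕ := Nat.nth (· ∈ B) (C u - 1)

noncomputable def compactBlock (u : ι) : Finset ℕ :=
  Icc (compactBlockEnd B C u + 1 - ν u) (compactBlockEnd B C u)

/-- Slot `s` of `u`'s compact block is charged to the busy slot whose index lies as far below
`C u - 1` as `s` lies below the end of the block. -/
noncomputable def chargedIndex (u : ι) (s : ℕ) : ℕ := C u - 1 - (compactBlockEnd B C u - s)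

variable {B C ν}

lemma compactBlockEnd_mem {u : ι} (hC0 : 0 < C u) (hCB : C u ≤ #B) : compactBlockEnd B C u ∈ B :=
  B.nth_mem_of_lt_card (by omega)

lemma le_compactBlockEnd (hB : ∀ y ∈ B, 1 ≤ y) {u : ι} (hC0 : 0 < C u) (hCB : C u ≤ #B) :
    C u ≤ compactBlockEnd B C u := by
  have hgap := B.nth_add_sub_le_nth (Nat.zero_le (C u - 1)) (by omega)
  have hfirst := hB _ (B.nth_mem_of_lt_card (k := 0) (by omega))
  unfold compactBlockEnd
  omega

lemma compactBlockEnd_le {u : ι} {x : ℕ} (hC0 : 0 < C u) (hCx : C u ≤ #{y ∈ B | y ≤ x}) :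
    compactBlockEnd B C u ≤ x :=
  B.nth_le_of_lt_card_filter_le (by omega)

lemma card_compactBlock {u : ι} (h : ν u ≤ compactBlockEnd B C u) :
    #(compactBlock B C ν u) = ν u := by
  rw [compactBlock, Nat.card_Icc]
  omega

lemma compactBlock_subset_Icc {T : ℕ} (hB : B ⊆ Icc 1 T) {u : ι} (hν : ν u ≤ C u) (hC0 : 0 < C u)
    (hCB : C u ≤ #B) : compactBlock B C ν u ⊆ Icc 1 T := by
  have hend := mem_Icc.mp (hB (compactBlockEnd_mem hC0 hCB))
  have := le_compactBlockEnd (fun y hy => (mem_Icc.mp (hB hy)).1) hC0 hCB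
  intro s hs
  rw [compactBlock, mem_Icc] at hs
  rw [mem_Icc]
  omega

lemma compactBlockEnd_add_le {u v : ι} (hCv : C v ≤ #B) (huv : C u + ν v ≤ C v) (hu : 0 < C u) :
    compactBlockEnd B C u + ν v ≤ compactBlockEnd B C v := by
  have := B.nth_add_sub_le_nth (i := C u - 1) (j := C v - 1) (by omega) (by omega)
  unfold compactBlockEnd
  omega

variable {S : Finset ι}

lemma pairwiseDisjoint_compactBlock (hν : ∀ u ∈ S, 1 ≤ ν u) (hC : ∀ u ∈ S, ν u ≤ C u ∧ C u ≤ #B)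
    (hdisj : (S : Set ι).PairwiseDisjoint fun u => Ico (C u - ν u) (C u)) :
    (S : Set ι).PairwiseDisjoint (compactBlock B C ν) := by
  intro u hu v hv huv
  have h := hdisj hu hv huv
  simp only [Function.onFun, ← disjoint_coe, coe_Ico, Set.Ico_disjoint_Ico] at h
  have := hν u hu
  have := hν v hv
  have := hC u hu
  have := hC v hv
  rw [Function.onFun, disjoint_left]
  intro s hsu hsv
  rw [compactBlock, mem_Icc] at hsu hsv
  rcases le_total (C u) (C v) with hle | hle
  · have : compactBlockEnd B C u + ν v ≤ compactBlockEnd B C v :=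
      compactBlockEnd_add_le (by omega) (by omega) (by omega)
    omega
  · have : compactBlockEnd B C v + ν u ≤ compactBlockEnd B C u :=
      compactBlockEnd_add_le (by omega) (by omega) (by omega)
    omega

lemma chargedIndex_mem_Ico {u : ι} {s : ℕ} (hνC : ν u ≤ C u) (hs : s ∈ compactBlock B C ν u) :
    chargedIndex B C u s ∈ Ico (C u - ν u) (C u) := by
  rw [compactBlock, mem_Icc] at hs
  rw [chargedIndex, mem_Ico]
  omega

lemma nth_chargedIndex_le {u : ι} {s : ℕ} (hνC : ν u ≤ C u) (hCB : C u ≤ #B)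
    (hs : s ∈ compactBlock B C ν u) : Nat.nth (· ∈ B) (chargedIndex B C u s) ≤ s := by
  have hi := mem_Ico.mp (chargedIndex_mem_Ico hνC hs)
  have hgap : Nat.nth (· ∈ B) (chargedIndex B C u s) + (C u - 1 - chargedIndex B C u s) ≤
      compactBlockEnd B C u :=
    B.nth_add_sub_le_nth (Nat.sub_le _ _) (by omega)
  rw [compactBlock, mem_Icc] at hs
  unfold chargedIndex at hgap ⊢
  omega

lemma card_filter_biUnion_compactBlock_le (hC : ∀ u ∈ S, ν u ≤ C u ∧ C u ≤ #B)
    (hdisj : (S : Set ι).PairwiseDisjoint fun u => Ico (C u - ν u) (C u)) (t : ℕ) :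
    #{s ∈ S.biUnion (compactBlock B C ν) | s ≤ t} ≤ #{s ∈ B | s ≤ t} := by
  calc #{s ∈ S.biUnion (compactBlock B C ν) | s ≤ t}
      = #(S.biUnion fun u => {s ∈ compactBlock B C ν u | s ≤ t}) := by rw [filter_biUnion]
    _ ≤ ∑ u ∈ S, #{s ∈ compactBlock B C ν u | s ≤ t} := card_biUnion_le
    _ = #(S.sigma fun u => {s ∈ compactBlock B C ν u | s ≤ t}) := (card_sigma _ _).symm
    _ ≤ #{s ∈ B | s ≤ t} := by
      refine card_le_card_of_injOn (fun p => Nat.nth (· ∈ B) (chargedIndex B C p.1 p.2)) ?_ ?_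
      · rintro ⟨u, s⟩ hp
        simp only [coe_sigma, Set.mem_sigma_iff, mem_coe, mem_filter] at hp
        obtain ⟨hu, hs, hst⟩ := hp
        have hi := mem_Ico.mp (chargedIndex_mem_Ico (hC u hu).1 hs)
        have := (hC u hu).2
        simp only [coe_filter, Set.mem_ofPred_eq]
        exact ⟨B.nth_mem_of_lt_card (by omega),
          (nth_chargedIndex_le (hC u hu).1 (hC u hu).2 hs).trans hst⟩
      · rintro ⟨u, s⟩ hp ⟨v, s'⟩ hp' heq
        simp only [coe_sigma, Set.mem_sigma_iff, mem_coe, mem_filter] at hp hp'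
        obtain ⟨hu, hs, -⟩ := hp
        obtain ⟨hv, hs', -⟩ := hp'
        have hi := chargedIndex_mem_Ico (hC u hu).1 hs
        have hi' := chargedIndex_mem_Ico (hC v hv).1 hs'
        have hidx : chargedIndex B C u s = chargedIndex B C v s' := by
          have := (hC u hu).2
          have := (hC v hv).2
          rw [mem_Ico] at hi hi'
          exact B.nth_injOn (by simp only [Set.mem_Iio]; omega)
            (by simp only [Set.mem_Iio]; omega) heq
        obtain rfl : u = v := hdisj.elim_finset hu hv _ (by rwa [hidx] at hi) hi'
        have := (hC u hu).1
        rw [compactBlock, mem_Icc] at hs hs'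
        unfold chargedIndex at hidx
        simp only [Sigma.mk.injEq, heq_eq_eq, true_and]
        omega

end CompactBlock

section ScheduleOfBlocks

variable {ι : Type*} (S : Finset ι) (I : ι → Finset ℕ)

open Classical in
noncomputable def scheduleOfBlocks (t : ℕ) : Option ι :=
  if h : ∃ u ∈ S, t ∈ I u then some h.choose else none

variable {S I}

lemma scheduleOfBlocks_eq_some_iff (hI : (S : Set ι).PairwiseDisjoint I) {t : ℕ} {u : ι} :
    scheduleOfBlocks S I t = some u ↔ u ∈ S ∧ t ∈ I u := by
  unfold scheduleOfBlocks
  split_ifs with h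
  · rw [Option.some_inj]
    constructor
    · rintro rfl
      exact h.choose_spec
    · rintro ⟨hu, ht⟩
      exact hI.elim_finset h.choose_spec.1 hu t h.choose_spec.2 ht
  · simp only [false_iff]
    exact fun hu => h ⟨u, hu⟩

lemma scheduleOfBlocks_ne_none_iff {t : ℕ} :
    scheduleOfBlocks S I t ≠ none ↔ t ∈ S.biUnion I := by
  unfold scheduleOfBlocks
  split_ifs with h <;> simpa using h

lemma filter_scheduleOfBlocks_eq_some [DecidableEq ι] {T : ℕ}
    (hI : (S : Set ι).PairwiseDisjoint I) {u : ι} (hu : u ∈ S) (huT : I u ⊆ Icc 1 T) :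
    {t ∈ Icc 1 T | scheduleOfBlocks S I t = some u} = I u := by
  ext t
  rw [mem_filter, scheduleOfBlocks_eq_some_iff hI]
  exact ⟨fun h => h.2.2, fun h => ⟨huT h, hu, h⟩⟩

lemma serves_scheduleOfBlocks {T U : ℕ} {ν d : Fin U → ℕ} {A : ℕ → ℕ} {S : Finset (Fin U)}
    {I : Fin U → Finset ℕ} (hI : (S : Set (Fin U)).PairwiseDisjoint I)
    (hIT : ∀ u ∈ S, I u ⊆ Icc 1 T) (hcard : ∀ u ∈ S, #(I u) = ν u) (hν : ∀ u ∈ S, 1 ≤ ν u)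
    (hdl : ∀ u ∈ S, ∀ t ∈ I u, t ≤ d u)
    (hA : ∀ t ∈ Icc 1 T, #{s ∈ S.biUnion I | s ≤ t} ≤ ∑ s ∈ Icc 1 t, A s) :
    Serves T U ν d A (scheduleOfBlocks S I) S := by
  refine ⟨fun u => ⟨fun hu => ?_, ?_⟩, fun u hu => ?_, fun u t _ ht => ?_, fun t ht => ?_⟩
  · obtain ⟨t, ht⟩ := card_pos.mp ((hν u hu).trans_eq (hcard u hu).symm)
    exact ⟨t, hIT u hu ht, (scheduleOfBlocks_eq_some_iff hI).mpr ⟨hu, ht⟩⟩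
  · rintro ⟨t, -, ht⟩
    exact ((scheduleOfBlocks_eq_some_iff hI).mp ht).1
  · rw [filter_scheduleOfBlocks_eq_some hI hu (hIT u hu), hcard u hu]
  · obtain ⟨hu, ht⟩ := (scheduleOfBlocks_eq_some_iff hI).mp ht
    exact hdl u hu t ht
  · refine le_trans (card_le_card fun s hs => ?_) (hA t ht)
    rw [mem_filter, mem_Icc] at hs
    rw [mem_filter, ← scheduleOfBlocks_ne_none_iff]
    exact ⟨hs.2, hs.1.2⟩

end ScheduleOfBlocks

section PrefixLoad

variable {ι κ : Type*} [LinearOrder κ] (key : ι → κ) (ν : ι → ℕ) (S : Finset ι)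

def prefixLoad (u : ι) : ℕ := ∑ v ∈ S with key v ≤ key u, ν v

variable {key ν S}

lemma le_prefixLoad {u : ι} (hu : u ∈ S) : ν u ≤ prefixLoad key ν S u :=
  single_le_sum (fun _ _ => Nat.zero_le _) (mem_filter.mpr ⟨hu, le_rfl⟩)

lemma prefixLoad_add_le {u v : ι} (hv : v ∈ S) (huv : key u < key v) :
    prefixLoad key ν S u + ν v ≤ prefixLoad key ν S v := by
  classical
  have hv' : v ∉ {w ∈ S | key w ≤ key u} := by simp [huv]
  rw [prefixLoad, add_comm, ← sum_insert hv']
  refine sum_le_sum_of_subset (insert_subset (mem_filter.mpr ⟨hv, le_rfl⟩) fun w hw => ?_)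
  rw [mem_filter] at hw ⊢
  exact ⟨hw.1, hw.2.trans huv.le⟩

lemma pairwiseDisjoint_Ico_prefixLoad (hkey : Function.Injective key) :
    (S : Set ι).PairwiseDisjoint
      fun u => Ico (prefixLoad key ν S u - ν u) (prefixLoad key ν S u) := by
  intro u hu v hv huv
  rw [Function.onFun, disjoint_left]
  intro i hiu hiv
  rw [mem_Ico] at hiu hiv
  rcases lt_or_gt_of_ne (hkey.ne huv) with h | h
  · have := prefixLoad_add_le (ν := ν) hv h
    omega
  · have := prefixLoad_add_le (ν := ν) hu h
    omega

end PrefixLoad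

def busySlots {ι : Type*} (T : ℕ) (σ : ℕ → Option ι) : Finset ℕ := {t ∈ Icc 1 T | σ t ≠ none}

section Serves

variable {T U : ℕ} {ν d : Fin U → ℕ} {A : ℕ → ℕ} {σ : ℕ → Option (Fin U)} {S : Finset (Fin U)}

lemma Serves.one_le (h : Serves T U ν d A σ S) {u : Fin U} (hu : u ∈ S) : 1 ≤ ν u := by
  obtain ⟨t, ht, htu⟩ := (h.1 u).mp hu
  rw [← h.2.1 u hu]
  exact card_pos.mpr ⟨t, mem_filter.mpr ⟨ht, htu⟩⟩

lemma Serves.card_filter_busySlots_le (h : Serves T U ν d A σ S) {t : ℕ} (ht : t ∈ Icc 1 T) :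
    #{s ∈ busySlots T σ | s ≤ t} ≤ ∑ s ∈ Icc 1 t, A s := by
  convert h.2.2.2 t ht using 2
  ext s
  simp only [busySlots, mem_filter, mem_Icc] at ht ⊢
  grind

lemma Serves.prefixLoad_le (h : Serves T U ν d A σ S) {κ : Type*} [LinearOrder κ]
    {key : Fin U → κ} (hkey : ∀ u v, key u ≤ key v → d u ≤ d v) (u : Fin U) :
    prefixLoad key ν S u ≤ #{t ∈ busySlots T σ | t ≤ d u} := by
  let slots : Fin U → Finset ℕ := fun v => {t ∈ Icc 1 T | σ t = some v}
  have hslots : (({v ∈ S | key v ≤ key u} : Finset (Fin U)) : Set (Fin U)).PairwiseDisjoint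
      slots := by
    intro v _ w _ hvw
    rw [Function.onFun, disjoint_left]
    intro t htv htw
    rw [mem_filter] at htv htw
    exact hvw (Option.some_injective _ (htv.2.symm.trans htw.2))
  calc prefixLoad key ν S u = ∑ v ∈ S with key v ≤ key u, #(slots v) :=
        sum_congr rfl fun v hv => (h.2.1 v (mem_filter.mp hv).1).symm
    _ = #({v ∈ S | key v ≤ key u}.biUnion slots) := (card_biUnion hslots).symm
    _ ≤ #{t ∈ busySlots T σ | t ≤ d u} := card_le_card fun t ht => by
        simp only [mem_biUnion, mem_filter, slots] at ht
        obtain ⟨v, ⟨-, hvu⟩, htT, htv⟩ := ht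
        simp only [busySlots, mem_filter]
        exact ⟨⟨htT, by simp [htv]⟩, (h.2.2.1 v t htT htv).trans (hkey v u hvu)⟩

end Serves

theorem exists_nonpreemptive_serves_of_load {T U : ℕ} {ν d : Fin U → ℕ} {A : ℕ → ℕ}
    {S : Finset (Fin U)} {B : Finset ℕ} {C : Fin U → ℕ} (hB : B ⊆ Icc 1 T)
    (hν : ∀ u ∈ S, 1 ≤ ν u) (hνC : ∀ u ∈ S, ν u ≤ C u)
    (hload : ∀ u ∈ S, C u ≤ #{t ∈ B | t ≤ d u})
    (hdisj : (S : Set (Fin U)).PairwiseDisjoint fun u => Ico (C u - ν u) (C u))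
    (hA : ∀ t ∈ Icc 1 T, #{s ∈ B | s ≤ t} ≤ ∑ s ∈ Icc 1 t, A s) :
    ∃ σ' : ℕ → Option (Fin U), Serves T U ν d A σ' S ∧
      ∀ u ∈ S, ∃ a b : ℕ, {t ∈ Icc 1 T | σ' t = some u} = Icc a b := by
  have hC : ∀ u ∈ S, ν u ≤ C u ∧ C u ≤ #B := fun u hu =>
    ⟨hνC u hu, (hload u hu).trans (card_le_card (filter_subset _ _))⟩
  have hC0 : ∀ u ∈ S, 0 < C u := fun u hu => (hν u hu).trans (hνC u hu)
  have hI := pairwiseDisjoint_compactBlock hν hC hdisj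
  have hIT : ∀ u ∈ S, compactBlock B C ν u ⊆ Icc 1 T := fun u hu =>
    compactBlock_subset_Icc hB (hνC u hu) (hC0 u hu) (hC u hu).2
  refine ⟨scheduleOfBlocks S (compactBlock B C ν), serves_scheduleOfBlocks hI hIT
    (fun u hu => card_compactBlock ?_) hν (fun u hu t ht => ?_)
    (fun t ht => (card_filter_biUnion_compactBlock_le hC hdisj t).trans (hA t ht)),
    fun u hu => ⟨_, _, filter_scheduleOfBlocks_eq_some hI hu (hIT u hu)⟩⟩
  · exact (hνC u hu).trans
      (le_compactBlockEnd (fun y hy => (mem_Icc.mp (hB hy)).1) (hC0 u hu) (hC u hu).2)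
  · exact (mem_Icc.mp ht).2.trans (compactBlockEnd_le (hC0 u hu) (hload u hu))

theorem stmt4_general (T U : ℕ) (ν d : Fin U → ℕ) (A : ℕ → ℕ)
    (S : Finset (Fin U)) (hfeas : Feasible T U ν d A S) :
    ∃ σ' : ℕ → Option (Fin U), Serves T U ν d A σ' S ∧
      ∀ u ∈ S, ∃ a b : ℕ,
        (Finset.Icc 1 T).filter (fun t => σ' t = some u) = Finset.Icc a b := by
  obtain ⟨σ, hσ⟩ := hfeas
  -- earliest deadline first, ties broken by index
  let key : Fin U → ℕ ×ₗ Fin U := fun u => toLex (d u, u)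
  have hkey_inj : Function.Injective key := fun u v h => (Prod.ext_iff.mp (toLex.injective h)).2
  have hkey_mono : ∀ u v, key u ≤ key v → d u ≤ d v := fun u v => Prod.Lex.monotone_fst _ _
  exact exists_nonpreemptive_serves_of_load (filter_subset _ _) (fun u hu => hσ.one_le hu)
    (fun u hu => le_prefixLoad hu) (fun u _ => hσ.prefixLoad_le hkey_mono u)
    (pairwiseDisjoint_Ico_prefixLoad hkey_inj) (fun t ht => hσ.card_filter_busySlots_le ht)

/-- Lemma 6: if `S` is feasible, then there is a non-preemptive schedule serving `S`,
i.e. one in which every served user's set of assigned slots is a set of consecutive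
integers (an interval `Finset.Icc a b`). -/
theorem stmt4 (T U : ℕ) (ν d : Fin U → ℕ) (A : ℕ → ℕ)
    (hν : ∀ i, 1 ≤ ν i) (hd : ∀ i, d i ∈ Finset.Icc 1 T)
    (S : Finset (Fin U)) (hfeas : Feasible T U ν d A S) :
    ∃ σ' : ℕ → Option (Fin U), Serves T U ν d A σ' S ∧
      ∀ u ∈ S, ∃ a b : ℕ,
        (Finset.Icc 1 T).filter (fun t => σ' t = some u) = Finset.Icc a b :=
  stmt4_general T U ν d A S hfeas
end

section
/- Assume all users have the common deadline T, i.e. d u = T for every u. Define Λ(A) as the maximum cardinality of a set B ⊆ {1,…,T} such that for every t ∈ {1,…,T}, |B ∩ {1,…,t}| ≤ ∑_{s=1}^{t} A s. Then a set S of users is feasible if and only if ∑_{u ∈ S} ν u ≤ Λ(A). (Feasibility characterization underlying the reduction of RAED-SCSB-COMMON to an unweighted knapsack with cumulative capacity.) -/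
/- The busy slots of a schedule serving `S` form an energy-admissible set of
`∑ u ∈ S, ν u` slots, so this sum is at most `Λ`. Conversely, admissibility passes to subsets,
so a maximum admissible set contains an admissible set of exactly `∑ u ∈ S, ν u` slots; these
can be split among the users of `S`, `ν u` slots each, and with the common deadline `T` the
deadline constraints hold automatically. -/

open Finset

lemma Finset.exists_option_fiber_card_eq {α β : Type*} [DecidableEq α] [DecidableEq β]
    (ν : β → ℕ) (S : Finset β) {B : Finset α} (hB : #B = ∑ u ∈ S, ν u) :
    ∃ σ : α → Option β,
      (∀ t u, σ t = some u → t ∈ B ∧ u ∈ S) ∧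
      ∀ u ∈ S, #{t ∈ B | σ t = some u} = ν u := by
  induction S using Finset.induction_on generalizing B with
  | empty => exact ⟨fun _ => none, by simp, by simp⟩
  | @insert a S ha ih =>
    rw [sum_insert ha] at hB
    obtain ⟨B₁, hB₁, hB₁card⟩ := exists_subset_card_eq (s := B) (n := ν a) (by omega)
    obtain ⟨σ, hσ, hσcard⟩ := ih (B := B \ B₁) (by rw [card_sdiff_of_subset hB₁]; omega)
    refine ⟨fun t => if t ∈ B₁ then some a else σ t, ?_, ?_⟩
    · intro t u h
      dsimp only at h
      split_ifs at h with ht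
      · cases h; exact ⟨hB₁ ht, mem_insert_self _ _⟩
      · obtain ⟨htB, hu⟩ := hσ t u h
        exact ⟨(mem_sdiff.mp htB).1, mem_insert_of_mem hu⟩
    · intro u hu
      rcases mem_insert.mp hu with rfl | hu
      · -- `σ` never assigns `u` since `u ∉ S`, so the fibre of `u` is `B₁`
        convert hB₁card using 2
        ext t
        by_cases ht : t ∈ B₁
        · simp [ht, hB₁ ht]
        · simpa [ht] using fun _ h => ha (hσ t u h).2
      · convert hσcard u hu using 2
        ext t
        have hau : a ≠ u := by rintro rfl; exact ha hu
        by_cases ht : t ∈ B₁ <;> simp [ht, hau]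

lemma card_inter_Icc_le_of_subset {B B' : Finset ℕ} {T : ℕ} {A : ℕ → ℕ} (hB' : B' ⊆ B)
    (hB : ∀ t ∈ Icc 1 T, #(B ∩ Icc 1 t) ≤ ∑ s ∈ Icc 1 t, A s) :
    ∀ t ∈ Icc 1 T, #(B' ∩ Icc 1 t) ≤ ∑ s ∈ Icc 1 t, A s := fun t ht =>
  (card_le_card (inter_subset_inter_right hB')).trans (hB t ht)

section Serves

variable {T U : ℕ} {ν d : Fin U → ℕ} {A : ℕ → ℕ} {σ : ℕ → Option (Fin U)} {S : Finset (Fin U)}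

lemma Serves.card_busy (h : Serves T U ν d A σ S) :
    #{t ∈ Icc 1 T | σ t ≠ none} = ∑ u ∈ S, ν u := by
  obtain ⟨hmem, hcard, -, -⟩ := h
  have hmaps : Set.MapsTo σ ↑({t ∈ Icc 1 T | σ t ≠ none} : Finset ℕ) ↑(S.map .some) := by
    intro t ht
    obtain ⟨ht, hne⟩ := mem_filter.mp ht
    obtain ⟨u, hu⟩ := Option.ne_none_iff_exists'.mp hne
    rw [hu]
    exact mem_map_of_mem _ ((hmem u).mpr ⟨t, ht, hu⟩)
  rw [card_eq_sum_card_fiberwise hmaps, sum_map]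
  refine sum_congr rfl fun u hu => ?_
  rw [filter_filter, ← hcard u hu]
  congr 1
  exact filter_congr fun t _ => by simp +contextual

lemma Serves.card_busy_inter_Icc_le (h : Serves T U ν d A σ S) :
    ∀ t ∈ Icc 1 T, #({t ∈ Icc 1 T | σ t ≠ none} ∩ Icc 1 t) ≤ ∑ s ∈ Icc 1 t, A s := by
  intro t ht
  refine le_trans (card_le_card fun s hs => ?_) (h.2.2.2 t ht)
  simp only [mem_inter, mem_filter] at hs ⊢
  exact ⟨hs.2, hs.1.2⟩

lemma feasible_of_admissible_card_eq (hν : ∀ u ∈ S, 1 ≤ ν u) (hd : ∀ u ∈ S, T ≤ d u)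
    {B : Finset ℕ} (hBT : B ⊆ Icc 1 T) (hBcard : #B = ∑ u ∈ S, ν u)
    (hBA : ∀ t ∈ Icc 1 T, #(B ∩ Icc 1 t) ≤ ∑ s ∈ Icc 1 t, A s) :
    Feasible T U ν d A S := by
  obtain ⟨σ, hσ, hσcard⟩ := exists_option_fiber_card_eq ν S hBcard
  have hfiber : ∀ u, {t ∈ Icc 1 T | σ t = some u} = {t ∈ B | σ t = some u} := fun u => by
    ext t
    simp only [mem_filter]
    exact ⟨fun ⟨_, h⟩ => ⟨(hσ t u h).1, h⟩, fun ⟨h, h'⟩ => ⟨hBT h, h'⟩⟩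
  refine ⟨σ, fun u => ⟨fun hu => ?_, fun ⟨t, _, ht⟩ => (hσ t u ht).2⟩,
    fun u hu => by rw [hfiber, hσcard u hu],
    fun u t ht hσt => (mem_Icc.mp ht).2.trans (hd u (hσ t u hσt).2), fun t ht => ?_⟩
  · obtain ⟨t, ht⟩ : {t ∈ B | σ t = some u}.Nonempty := by
      rw [← card_pos, hσcard u hu]; exact hν u hu
    rw [mem_filter] at ht
    exact ⟨t, hBT ht.1, ht.2⟩
  · refine le_trans (card_le_card fun s hs => ?_) (hBA t ht)
    rw [mem_filter] at hs
    obtain ⟨u, hu⟩ := Option.ne_none_iff_exists'.mp hs.2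
    exact mem_inter.mpr ⟨(hσ s u hu).1, hs.1⟩

end Serves

/-- Feasibility characterization for common deadlines: with `d u = T` for every user,
a set `S` is feasible iff `∑_{u ∈ S} ν u ≤ Λ(A)`, where `Λ(A)` is the maximum
cardinality of a set `B ⊆ {1,…,T}` of busy slots satisfying the cumulative energy
constraints. -/
theorem stmt6 (T U : ℕ) (ν d : Fin U → ℕ) (A : ℕ → ℕ)
    (hν : ∀ i, 1 ≤ ν i) (hd : ∀ u, d u = T)
    (Λ : ℕ)
    (hΛ : IsGreatest {n : ℕ | ∃ B ⊆ Finset.Icc 1 T, B.card = n ∧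
      ∀ t ∈ Finset.Icc 1 T, (B ∩ Finset.Icc 1 t).card ≤ ∑ s ∈ Finset.Icc 1 t, A s} Λ)
    (S : Finset (Fin U)) :
    Feasible T U ν d A S ↔ (∑ u ∈ S, ν u) ≤ Λ := by
  constructor
  · rintro ⟨σ, hσ⟩
    exact hΛ.2 ⟨_, filter_subset _ _, hσ.card_busy, hσ.card_busy_inter_Icc_le⟩
  · intro hle
    obtain ⟨B, hBT, hBcard, hBA⟩ := hΛ.1
    obtain ⟨B', hB'B, hB'card⟩ := exists_subset_card_eq (hle.trans hBcard.ge)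
    exact feasible_of_admissible_card_eq (fun u _ => hν u) (fun u _ => (hd u).ge) (hB'B.trans hBT)
      hB'card (card_inter_Icc_le_of_subset hB'B hBA)
end

section
/- Let T ∈ ℕ and A : {1,…,T} → ℕ. The maximum cardinality of a set B ⊆ {1,…,T} satisfying |B ∩ {1,…,t}| ≤ ∑_{s=1}^{t} A s for every t ∈ {1,…,T} equals min over t ∈ {0,1,…,T} of (∑_{s=1}^{t} A s + (T − t)). (Correctness of the cumulative-capacity value Λ* computed by the BUDGET procedure: Λ* is the maximum possible number of slots that can be used by the EBS.) -/
/-- Correctness of the BUDGET procedure: the maximum cardinality of an energy-feasible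
set of busy slots `B ⊆ {1,…,T}` equals
`min_{t ∈ {0,…,T}} (∑_{s=1}^{t} A s + (T − t))`. -/
theorem stmt8 (T : ℕ) (A : ℕ → ℕ) :
    IsGreatest {n : ℕ | ∃ B ⊆ Finset.Icc 1 T, B.card = n ∧
        ∀ t ∈ Finset.Icc 1 T, (B ∩ Finset.Icc 1 t).card ≤ ∑ s ∈ Finset.Icc 1 t, A s}
      ((Finset.range (T + 1)).inf'
        (Finset.nonempty_range_iff.mpr (Nat.succ_ne_zero T))
        (fun t => (∑ s ∈ Finset.Icc 1 t, A s) + (T - t))) := by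
  set S : ℕ → ℕ := fun t => ∑ s ∈ Finset.Icc 1 t, A s with hS
  set M := (Finset.range (T + 1)).inf'
      (Finset.nonempty_range_iff.mpr (Nat.succ_ne_zero T))
      (fun t => S t + (T - t)) with hM
  have hle : ∀ t ≤ T, M ≤ S t + (T - t) := fun t ht =>
    Finset.inf'_le _ (Finset.mem_range.mpr (Nat.lt_succ_of_le ht))
  have hMT : M ≤ T := by
    have := hle 0 (Nat.zero_le T)
    simpa [S] using this
  constructor
  · refine ⟨Finset.Icc (T - M + 1) T, ?_, ?_, ?_⟩
    · exact Finset.Icc_subset_Icc (by omega) le_rfl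
    · rw [Nat.card_Icc]; omega
    · intro t ht
      simp only [Finset.mem_Icc] at ht
      have h1 := hle t ht.2
      simp only [S] at h1
      have hsub : Finset.Icc (T - M + 1) T ∩ Finset.Icc 1 t ⊆ Finset.Icc (T - M + 1) t := by
        intro x hx
        simp only [Finset.mem_inter, Finset.mem_Icc] at hx ⊢
        omega
      have hc : (Finset.Icc (T - M + 1) T ∩ Finset.Icc 1 t).card ≤ t + 1 - (T - M + 1) := by
        calc _ ≤ (Finset.Icc (T - M + 1) t).card := Finset.card_le_card hsub
        _ = t + 1 - (T - M + 1) := Nat.card_Icc _ _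
      omega
  · rintro n ⟨B, hB, rfl, hfeas⟩
    apply Finset.le_inf'
    intro t ht
    rw [Finset.mem_range, Nat.lt_succ_iff] at ht
    rcases Nat.eq_zero_or_pos t with rfl | hpos
    · have : B.card ≤ T := by
        calc B.card ≤ (Finset.Icc 1 T).card := Finset.card_le_card hB
        _ = T := by rw [Nat.card_Icc]; omega
      simpa [S] using this
    · have h1 := hfeas t (Finset.mem_Icc.mpr ⟨hpos, ht⟩)
      have h2 : (B \ Finset.Icc 1 t).card ≤ T - t := by
        have hsub : B \ Finset.Icc 1 t ⊆ Finset.Icc (t+1) T := by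
          intro x hx
          simp only [Finset.mem_sdiff, Finset.mem_Icc, not_and, not_le] at hx
          have := hB hx.1
          simp only [Finset.mem_Icc] at this ⊢
          omega
        calc _ ≤ (Finset.Icc (t+1) T).card := Finset.card_le_card hsub
        _ = T - t := by rw [Nat.card_Icc]; omega
      simp only [S]
      have h3 : B.card = (B ∩ Finset.Icc 1 t).card + (B \ Finset.Icc 1 t).card :=
        (Finset.card_inter_add_card_sdiff B _).symm
      omega
end

section
/- Let a : Fin n → ℕ with a i ≥ 1 for all i, and let T ∈ ℕ satisfy ∑_{i} a i = 2T. Then the following are equivalent: (1) there exist a channel assignment f : Fin n → Bool and slot sets B : Fin n → Finset (Fin T) with |B i| = a i for all i, such that B i and B j are disjoint whenever i ≠ j and f i = f j; (2) there exists a subset P ⊆ Fin n with ∑_{i ∈ P} a i = T (i.e. the multiset {a i} can be partitioned into two parts of equal sum). (Correctness of the reduction from PARTITION used in Lemma 2 to prove that RAED-MCSB is NP-hard: all users can be scheduled on one EBS with two channels, full energy, and common deadline T if and only if PARTITION is solvable.) -/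
lemma sched_aux (n T : ℕ) (a : Fin n → ℕ) (Q : Finset (Fin n))
    (hQ : ∑ i ∈ Q, a i ≤ T) :
    ∃ B : Fin n → Finset (Fin T), (∀ i ∈ Q, (B i).card = a i) ∧
      ∀ i ∈ Q, ∀ j ∈ Q, i ≠ j → Disjoint (B i) (B j) := by
  set g : Fin n → ℕ := fun i => ∑ j ∈ Q.filter (fun j => j < i), a j with hg
  have hle : ∀ i ∈ Q, g i + a i ≤ T := by
    intro i hi
    have hsub : insert i (Q.filter (fun j => j < i)) ⊆ Q := by
      intro x hx
      rcases Finset.mem_insert.mp hx with h | h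
      · exact h ▸ hi
      · exact (Finset.mem_filter.mp h).1
    calc g i + a i = ∑ j ∈ insert i (Q.filter (fun j => j < i)), a j := by
          rw [Finset.sum_insert (by simp)]; ring
      _ ≤ ∑ i ∈ Q, a i := Finset.sum_le_sum_of_subset hsub
      _ ≤ T := hQ
  have hmono : ∀ i ∈ Q, ∀ j ∈ Q, i < j → g i + a i ≤ g j := by
    intro i hi j hj hij
    have hsub : insert i (Q.filter (fun k => k < i)) ⊆ Q.filter (fun k => k < j) := by
      intro x hx
      rcases Finset.mem_insert.mp hx with h | h
      · subst h; exact Finset.mem_filter.mpr ⟨hi, hij⟩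
      · obtain ⟨hxQ, hxi⟩ := Finset.mem_filter.mp h
        exact Finset.mem_filter.mpr ⟨hxQ, hxi.trans hij⟩
    calc g i + a i = ∑ k ∈ insert i (Q.filter (fun k => k < i)), a k := by
          rw [Finset.sum_insert (by simp)]; ring
      _ ≤ g j := Finset.sum_le_sum_of_subset hsub
  refine ⟨fun i => (Finset.Ico (g i) (min (g i + a i) T)).attachFin
    (fun m hm => lt_of_lt_of_le (Finset.mem_Ico.mp hm).2 (min_le_right _ _)), ?_, ?_⟩
  · intro i hi
    rw [Finset.card_attachFin, Nat.card_Ico, min_eq_left (hle i hi)]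
    omega
  · intro i hi j hj hij
    rw [Finset.disjoint_left]
    intro t hti htj
    rw [Finset.mem_attachFin, Finset.mem_Ico] at hti htj
    rcases lt_or_gt_of_ne hij with h | h
    · have := hmono i hi j hj h; omega
    · have := hmono j hj i hi h; omega

/-- Correctness of the PARTITION reduction (Lemma 2): with two channels, full energy,
common deadline `T` and `∑ i, a i = 2T`, all users can be scheduled iff the multiset
`{a i}` can be partitioned into two parts of equal sum `T`. -/
theorem stmt9 (n T : ℕ) (a : Fin n → ℕ) (ha : ∀ i, 1 ≤ a i)
    (hsum : (∑ i, a i) = 2 * T) :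
    (∃ (f : Fin n → Bool) (B : Fin n → Finset (Fin T)),
      (∀ i, (B i).card = a i) ∧
      ∀ i j, i ≠ j → f i = f j → Disjoint (B i) (B j)) ↔
    (∃ P : Finset (Fin n), (∑ i ∈ P, a i) = T) := by
  constructor
  · rintro ⟨f, B, hcard, hdisj⟩
    have key : ∀ (b : Bool), ∑ i ∈ Finset.univ.filter (fun i => f i = b), a i ≤ T := by
      intro b
      set Q := Finset.univ.filter (fun i => f i = b) with hQ
      have hd : ∀ i ∈ Q, ∀ j ∈ Q, i ≠ j → Disjoint (B i) (B j) := by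
        intro i hi j hj hij
        simp only [hQ, Finset.mem_filter] at hi hj
        exact hdisj i j hij (hi.2.trans hj.2.symm)
      calc ∑ i ∈ Q, a i = ∑ i ∈ Q, (B i).card := by
            exact Finset.sum_congr rfl fun i _ => (hcard i).symm
        _ = (Q.biUnion B).card := (Finset.card_biUnion hd).symm
        _ ≤ (Finset.univ : Finset (Fin T)).card := Finset.card_le_univ _
        _ = T := by simp
    have hsplit := Finset.sum_filter_add_sum_filter_not Finset.univ
      (fun i => f i = true) a
    have hfalse : Finset.univ.filter (fun i => ¬ f i = true) =
        Finset.univ.filter (fun i => f i = false) := by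
      apply Finset.filter_congr; intro x _; simp
    rw [hfalse, hsum] at hsplit
    have h1 := key true
    have h2 := key false
    exact ⟨Finset.univ.filter (fun i => f i = true), by omega⟩
  · rintro ⟨P, hP⟩
    have hPc : ∑ i ∈ Pᶜ, a i = T := by
      have := Finset.sum_add_sum_compl P a
      rw [hP, hsum] at this; omega
    obtain ⟨B₁, hc₁, hd₁⟩ := sched_aux n T a P (le_of_eq hP)
    obtain ⟨B₂, hc₂, hd₂⟩ := sched_aux n T a Pᶜ (le_of_eq hPc)
    refine ⟨fun i => decide (i ∈ P), fun i => if i ∈ P then B₁ i else B₂ i, ?_, ?_⟩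
    · intro i
      by_cases h : i ∈ P
      · simp [h, hc₁ i h]
      · simp [h, hc₂ i (Finset.mem_compl.mpr h)]
    · intro i j hij hf
      by_cases hi : i ∈ P <;> by_cases hj : j ∈ P
      · simpa [hi, hj] using hd₁ i hi j hj hij
      · simp [hi, hj] at hf
      · simp [hi, hj] at hf
      · simpa [hi, hj] using hd₂ i (Finset.mem_compl.mpr hi) j (Finset.mem_compl.mpr hj) hij
end

section
/- Let U be a finite type of users, B a finite index type of base stations, and F : B → Finset U → Prop a feasibility predicate that is downward closed (if F b S and S' ⊆ S then F b S'). Suppose (S_b)_{b ∈ B} is a family of finsets with F b (S_b) for each b satisfying the greedy property: for every b ∈ B and every finset O ⊆ U with O ∩ (⋃_{c ∈ B} S_c) = ∅ and F b O, one has |O| ≤ |S_b|. Then for every pairwise disjoint family (P_b)_{b ∈ B} with F b (P_b) for each b, ∑_{b} |P_b| ≤ 2 ∑_{b} |S_b|. (Lemma 5 of the paper in abstract form: ALG-SCMB, which iteratively lets each base station serve a maximum feasible set of remaining users, is a 1/2-approximation algorithm for RAED-SCMB.) -/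
/-- Lemma 5 in abstract form: if each `S b` is feasible for `b` and the greedy property
holds (any feasible set of users untouched by the algorithm has cardinality at most
`|S b|`), then any disjoint feasible family `(P b)` serves at most twice as many users,
i.e. ALG-SCMB is a 1/2-approximation algorithm. -/
theorem stmt11 (U B : Type) [Fintype U] [Fintype B]
    (F : B → Finset U → Prop)
    (hdc : ∀ b S S', F b S → S' ⊆ S → F b S')
    (S : B → Finset U) (hS : ∀ b, F b (S b))
    (hgreedy : ∀ (b : B) (O : Finset U),
      (∀ u ∈ O, ∀ c : B, u ∉ S c) → F b O → O.card ≤ (S b).card)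
    (P : B → Finset U) (hPdisj : ∀ b c, b ≠ c → Disjoint (P b) (P c))
    (hP : ∀ b, F b (P b)) :
    (∑ b, (P b).card) ≤ 2 * ∑ b, (S b).card := by
  classical
  set T : Finset U := Finset.univ.biUnion S with hT
  have key : ∀ b, (P b).card ≤ (P b ∩ T).card + (S b).card := by
    intro b
    have h1 : (P b).card = (P b ∩ T).card + (P b \ T).card := by
      rw [Finset.card_inter_add_card_sdiff]
    have h2 : (P b \ T).card ≤ (S b).card := by
      apply hgreedy b
      · intro u hu c huc
        have : u ∈ T := Finset.mem_biUnion.2 ⟨c, Finset.mem_univ c, huc⟩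
        exact (Finset.mem_sdiff.1 hu).2 this
      · exact hdc b (P b) _ (hP b) (Finset.sdiff_subset)
    omega
  have hsum1 : (∑ b, (P b).card) ≤ (∑ b, (P b ∩ T).card) + ∑ b, (S b).card := by
    rw [← Finset.sum_add_distrib]
    exact Finset.sum_le_sum fun b _ => key b
  have hsum2 : (∑ b, (P b ∩ T).card) ≤ T.card := by
    have hdisj : ∀ b ∈ Finset.univ, ∀ c ∈ Finset.univ, b ≠ c →
        Disjoint (P b ∩ T) (P c ∩ T) := fun b _ c _ hbc =>
      (hPdisj b c hbc).mono Finset.inter_subset_left Finset.inter_subset_left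
    calc (∑ b, (P b ∩ T).card) = (Finset.univ.biUnion (fun b => P b ∩ T)).card :=
          (Finset.card_biUnion hdisj).symm
      _ ≤ T.card := Finset.card_le_card (Finset.biUnion_subset.2
          fun b _ => Finset.inter_subset_right)
  have hsum3 : T.card ≤ ∑ b, (S b).card := Finset.card_biUnion_le
  omega
end
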